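/- arXiv:0704.1293 — 7 statements merged into one kernel-verified Lean document; each statement's English description precedes it below -/
import Mathlib

section
/- Let m be an odd positive integer, F = 𝔽_{2^m}, n = 2^m − 1, α a primitive element of F, and f : F → F an almost perfect nonlinear function with f(0) = 0. Then the code C_f = {v ∈ 𝔽₂^n : ∑_i v_i·α^i = 0 and ∑_i v_i·f(α^i) = 0}, viewed as an 𝔽₂-subspace of 𝔽₂^n, has dimension 2^m − 2m − 1. -/
/-- `f` is almost perfect nonlinear: for every `(a,b) ≠ (0,0)`, the system
`x + y = a`, `f x + f y = b` has at most two solutions `(x,y)`. -/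
def IsAPN {F : Type*} [Field F] (f : F → F) : Prop :=
  ∀ a b : F, (a, b) ≠ ((0 : F), (0 : F)) →
    {p : F × F | p.1 + p.2 = a ∧ f p.1 + f p.2 = b}.ncard ≤ 2

/-- The binary code `C_f` with parity checks `∑ v_i • α^i = 0` and
`∑ v_i • f (α^i) = 0` (scalars from `𝔽₂` acting through `{0,1} ⊆ ℕ`). -/
def codeC {F : Type*} [Field F] (n : ℕ) (α : F) (f : F → F) :
    Set (Fin n → ZMod 2) :=
  {v | ∑ i : Fin n, (v i).val • α ^ (i : ℕ) = 0 ∧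
       ∑ i : Fin n, (v i).val • f (α ^ (i : ℕ)) = 0}

open Finset

private def eps : ZMod 2 → ℤ := fun t => if t = 0 then 1 else -1

private lemma eps_add : ∀ s t : ZMod 2, eps (s + t) = eps s * eps t := by decide

private lemma eps_zero : eps 0 = 1 := rfl

private lemma eps_one : eps 1 = -1 := rfl

section Key

variable {F : Type*} [Field F] [Fintype F]

/-- Existence of an element where a nonzero `ZMod 2`-valued hom is `1`. -/
private lemma exists_one (g : F →+ ZMod 2) (hg : g ≠ 0) : ∃ z, g z = 1 := by
  by_contra h
  push_neg at h
  apply hg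
  ext x
  simp only [AddMonoidHom.zero_apply]
  have h10 : ∀ t : ZMod 2, t ≠ 1 → t = 0 := by decide
  exact h10 _ (h x)

private lemma key_reduced {m : ℕ} (hm : 3 ≤ m) (hmodd : Odd m)
    (hcard : Fintype.card F = 2 ^ m) (hchar : CharP F 2)
    (f : F → F) (hf0 : f 0 = 0) (hapn : IsAPN f)
    (g₂ χ : F →+ ZMod 2) (hg₂ : g₂ ≠ 0) (hfg : ∀ x, g₂ (f x) = 0)
    (hχ0 : χ ≠ 0) (hχg : χ ≠ g₂) : False := by
  classical
  haveI := hchar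
  have z2 : ∀ t : ZMod 2, t ≠ 0 → t = 1 := by decide
  obtain ⟨z, hz⟩ := exists_one g₂ hg₂
  set H : Finset F := Finset.univ.filter (fun b => g₂ b = 0) with hH
  -- cardinality of H
  have hHK : H.card = (Finset.univ.filter (fun b => g₂ b = 1)).card := by
    apply Finset.card_bij' (fun b _ => b + z) (fun b _ => b + z)
    · intro a ha
      simp only [hH, Finset.mem_filter, Finset.mem_univ, true_and] at ha ⊢
      rw [map_add, ha, hz, zero_add]
    · intro a ha
      simp only [hH, Finset.mem_filter, Finset.mem_univ, true_and] at ha ⊢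
      rw [map_add, ha, hz]
      decide
    · intro a _
      rw [add_assoc, CharTwo.add_self_eq_zero, add_zero]
    · intro a _
      rw [add_assoc, CharTwo.add_self_eq_zero, add_zero]
  have hfeq : Finset.univ.filter (fun b : F => ¬ g₂ b = 0) =
      Finset.univ.filter (fun b => g₂ b = 1) := by
    apply Finset.filter_congr
    intro x _
    constructor
    · intro hx; exact z2 _ hx
    · intro hx; rw [hx]; decide
  have hsplit := Finset.card_filter_add_card_filter_not
    (s := (Finset.univ : Finset F)) (p := fun b => g₂ b = 0)
  rw [hfeq, Finset.card_univ, hcard] at hsplit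
  rw [← hH] at hsplit
  have hpow : 2 ^ m = 2 * 2 ^ (m - 1) := by
    rw [← pow_succ']
    congr 1
    omega
  have hHcard : H.card = 2 ^ (m - 1) := by omega
  -- b₀ ∈ H with χ b₀ = 1
  obtain ⟨b₀, hb₀H, hb₀χ⟩ : ∃ b₀, g₂ b₀ = 0 ∧ χ b₀ = 1 := by
    by_contra hcon
    push_neg at hcon
    have hker : ∀ b, g₂ b = 0 → χ b = 0 := by
      intro b hb
      by_contra hb'
      exact hcon b hb (z2 _ hb')
    apply hχg
    obtain ⟨y, hy1⟩ := exists_one χ hχ0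
    have hy2 : g₂ y = 1 := by
      by_contra h
      have h0 : g₂ y = 0 := by
        by_contra h0
        exact h (z2 _ h0)
      rw [hker y h0] at hy1
      exact absurd hy1 (by decide)
    ext x
    by_cases hx : g₂ x = 0
    · rw [hker x hx, hx]
    · have hx1 := z2 _ hx
      have hxy : g₂ (x + y) = 0 := by
        rw [map_add, hx1, hy2]; decide
      have hc := hker _ hxy
      rw [map_add, hy1] at hc
      have h11 : ∀ t : ZMod 2, t + 1 = 0 → t = 1 := by decide
      rw [h11 _ hc, hx1]
  -- the sum over H of eps ∘ χ vanishes
  have hX : ∑ b ∈ H, eps (χ b) = 0 := by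
    have hre : ∑ b ∈ H, eps (χ (b + b₀)) = ∑ b ∈ H, eps (χ b) := by
      apply Finset.sum_nbij' (fun b => b + b₀) (fun b => b + b₀)
      · intro a ha
        simp only [hH, Finset.mem_filter, Finset.mem_univ, true_and] at ha ⊢
        rw [map_add, ha, hb₀H, add_zero]
      · intro a ha
        simp only [hH, Finset.mem_filter, Finset.mem_univ, true_and] at ha ⊢
        rw [map_add, ha, hb₀H, add_zero]
      · intro a _
        rw [add_assoc, CharTwo.add_self_eq_zero, add_zero]
      · intro a _
        rw [add_assoc, CharTwo.add_self_eq_zero, add_zero]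
      · intro a _
        rfl
    have hshift : ∀ b, eps (χ (b + b₀)) = - eps (χ b) := by
      intro b
      rw [map_add, hb₀χ, eps_add, eps_one]
      ring
    rw [Finset.sum_congr rfl (fun b _ => hshift b)] at hre
    rw [Finset.sum_neg_distrib] at hre
    omega
  -- fibers of x ↦ f x + f (x + a) over H all have exactly two elements
  have hmaps : ∀ a : F, ∀ x : F, f x + f (x + a) ∈ H := by
    intro a x
    simp only [hH, Finset.mem_filter, Finset.mem_univ, true_and]
    rw [map_add, hfg, hfg, add_zero]
  have hfib : ∀ a : F, a ≠ 0 → ∀ b ∈ H,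
      (Finset.univ.filter (fun x => f x + f (x + a) = b)).card = 2 := by
    intro a ha
    have hle : ∀ b : F, (Finset.univ.filter (fun x => f x + f (x + a) = b)).card ≤ 2 := by
      intro b
      have happ := hapn a b (by
        intro h
        rw [Prod.mk.injEq] at h
        exact ha h.1)
      set s := Finset.univ.filter (fun x => f x + f (x + a) = b) with hs
      have hinj : Function.Injective (fun x : F => (x, x + a)) := by
        intro x y h
        exact congrArg Prod.fst h
      have hsub : (↑(s.image (fun x => (x, x + a))) : Set (F × F)) ⊆
          {p : F × F | p.1 + p.2 = a ∧ f p.1 + f p.2 = b} := by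
        intro p hp
        simp only [Finset.coe_image, Set.mem_image, Finset.mem_coe] at hp
        obtain ⟨x, hx, rfl⟩ := hp
        simp only [hs, Finset.mem_filter] at hx
        refine ⟨?_, hx.2⟩
        simp only
        rw [← add_assoc, CharTwo.add_self_eq_zero, zero_add]
      calc s.card = (s.image (fun x => (x, x + a))).card :=
            (Finset.card_image_of_injective _ hinj).symm
        _ = (↑(s.image (fun x => (x, x + a))) : Set (F × F)).ncard :=
            (Set.ncard_coe_finset _).symm
        _ ≤ {p : F × F | p.1 + p.2 = a ∧ f p.1 + f p.2 = b}.ncard :=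
            Set.ncard_le_ncard hsub (Set.toFinite _)
        _ ≤ 2 := happ
    have htot : ∑ b ∈ H, (Finset.univ.filter (fun x => f x + f (x + a) = b)).card = 2 ^ m := by
      rw [← Finset.card_eq_sum_card_fiberwise (fun x _ => hmaps a x)]
      rw [Finset.card_univ, hcard]
    have hconst : ∑ _b ∈ H, 2 = 2 ^ m := by
      rw [Finset.sum_const, hHcard, smul_eq_mul]
      omega
    exact fun b hb =>
      (Finset.sum_eq_sum_iff_of_le (fun i _ => hle i)).1 (htot.trans hconst.symm) b hb
  -- character sum for a ≠ 0 vanishes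
  have hTa : ∀ a : F, a ≠ 0 → ∑ x : F, eps (χ (f x + f (x + a))) = 0 := by
    intro a ha
    rw [← Finset.sum_fiberwise_of_maps_to (fun x _ => hmaps a x)
      (fun x => eps (χ (f x + f (x + a))))]
    have hinner : ∀ b ∈ H,
        ∑ x ∈ Finset.univ.filter (fun x => f x + f (x + a) = b),
          eps (χ (f x + f (x + a))) = 2 * eps (χ b) := by
      intro b hb
      rw [Finset.sum_congr rfl (fun x hx => by
        rw [(Finset.mem_filter.1 hx).2])]
      rw [Finset.sum_const, hfib a ha b hb]
      simp
    rw [Finset.sum_congr rfl hinner, ← Finset.mul_sum, hX, mul_zero]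
  -- the square identity
  set S := ∑ x : F, eps (χ (f x)) with hSdef
  have hsq : S * S = 2 ^ m := by
    have expand : S * S = ∑ x : F, ∑ y : F, eps (χ (f x + f y)) := by
      rw [hSdef, Finset.sum_mul_sum]
      apply Finset.sum_congr rfl
      intro x _
      apply Finset.sum_congr rfl
      intro y _
      rw [← eps_add, ← map_add]
    have reindex : ∀ x : F, ∑ y : F, eps (χ (f x + f y)) =
        ∑ a : F, eps (χ (f x + f (x + a))) := by
      intro x
      exact (Fintype.sum_equiv (Equiv.addLeft x)
        (fun a => eps (χ (f x + f (x + a))))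
        (fun y => eps (χ (f x + f y))) (fun a => rfl)).symm
    rw [expand, Finset.sum_congr rfl (fun x _ => reindex x), Finset.sum_comm]
    rw [Finset.sum_eq_single 0]
    · have : ∀ x : F, eps (χ (f x + f (x + 0))) = 1 := by
        intro x
        rw [add_zero, CharTwo.add_self_eq_zero, map_zero, eps_zero]
      rw [Finset.sum_congr rfl (fun x _ => this x), Finset.sum_const, Finset.card_univ, hcard]
      simp
    · intro a _ ha
      exact hTa a ha
    · intro h
      exact absurd (Finset.mem_univ 0) h
  -- contradiction with m odd
  have hnat : S.natAbs * S.natAbs = 2 ^ m := by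
    have h := congrArg Int.natAbs hsq
    rwa [Int.natAbs_mul, show ((2 : ℤ) ^ m).natAbs = 2 ^ m by
      rw [Int.natAbs_pow]; rfl] at h
  obtain ⟨j, hjle, hj⟩ := (Nat.dvd_prime_pow Nat.prime_two).1 ⟨S.natAbs, hnat.symm⟩
  rw [hj, ← pow_add] at hnat
  have hjm := Nat.pow_right_injective (le_refl 2) hnat
  obtain ⟨k, hk⟩ := hmodd
  omega

private lemma exists_third {m : ℕ} (hm : 3 ≤ m)
    (hcard : Fintype.card F = 2 ^ m) (hchar : CharP F 2) (g₂ : F →+ ZMod 2) :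
    ∃ χ : F →+ ZMod 2, χ ≠ 0 ∧ χ ≠ g₂ := by
  classical
  haveI := hchar
  letI : Algebra (ZMod 2) F := ZMod.algebra _ _
  haveI : Module.Finite (ZMod 2) F := Module.finite_iff_finite.mpr inferInstance
  have hd2 : 2 ≤ Module.finrank (ZMod 2) F := by
    by_contra h
    push_neg at h
    have hcard2 : Fintype.card F = 2 ^ Module.finrank (ZMod 2) F := by
      rw [Module.card_eq_pow_finrank (K := ZMod 2) (V := F), ZMod.card]
    rw [hcard] at hcard2
    have := Nat.pow_right_injective (le_refl 2) hcard2
    omega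
  let b := Module.finBasis (ZMod 2) F
  let c : Fin (Module.finrank (ZMod 2) F) → (F →+ ZMod 2) :=
    fun i => (b.coord i).toAddMonoidHom
  have hcb : ∀ i j, c i (b j) = if j = i then 1 else 0 := by
    intro i j
    simp [c, b, Module.Basis.coord_apply, Module.Basis.repr_self, Finsupp.single_apply]
  let i0 : Fin (Module.finrank (ZMod 2) F) := ⟨0, by omega⟩
  let i1 : Fin (Module.finrank (ZMod 2) F) := ⟨1, by omega⟩
  have hne : i1 ≠ i0 := by
    intro h
    simpa [i0, i1, Fin.ext_iff] using h
  have hA0 : c i0 ≠ 0 := by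
    intro h
    have h2 := DFunLike.congr_fun h (b i0)
    rw [hcb] at h2
    simp at h2
  have hB0 : c i1 ≠ 0 := by
    intro h
    have h2 := DFunLike.congr_fun h (b i1)
    rw [hcb] at h2
    simp at h2
  by_cases hg : g₂ = c i0
  · refine ⟨c i1, hB0, ?_⟩
    rw [hg]
    intro h
    have h2 := DFunLike.congr_fun h (b i1)
    rw [hcb, hcb] at h2
    rw [if_pos rfl, if_neg hne] at h2
    exact one_ne_zero h2
  · exact ⟨c i0, hA0, fun h => hg h.symm⟩

private lemma key {m : ℕ} (hm : 3 ≤ m) (hmodd : Odd m)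
    (hcard : Fintype.card F = 2 ^ m) (hchar : CharP F 2)
    (f : F → F) (hf0 : f 0 = 0) (hapn : IsAPN f)
    (g₁ g₂ : F →+ ZMod 2) (hfg : ∀ x, g₁ x + g₂ (f x) = 0)
    (hne : ¬(g₁ = 0 ∧ g₂ = 0)) : False := by
  classical
  haveI := hchar
  have zcases : ∀ t : ZMod 2, t = 0 ∨ t = 1 := by decide
  have zadd : ∀ s t : ZMod 2, s + t = 0 → t = s := by decide
  by_cases hg₂ : g₂ = 0
  · apply hne
    refine ⟨?_, hg₂⟩
    ext x
    have h := hfg x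
    rw [hg₂] at h
    simpa using h
  obtain ⟨u, hu⟩ := exists_one g₂ hg₂
  set ℓ : F → F := fun x => (g₁ x).val • u with hℓ
  have hvs : ∀ c d : ZMod 2, ((c + d).val) • u = c.val • u + d.val • u := by
    intro c d
    rcases zcases c with rfl | rfl <;> rcases zcases d with rfl | rfl <;>
      simp [ZMod.val_one]
    · ring
  have hℓadd : ∀ x y, ℓ (x + y) = ℓ x + ℓ y := by
    intro x y
    simp only [hℓ]
    rw [map_add g₁, hvs]
  have hℓ0 : ℓ 0 = 0 := by
    simp [hℓ]
  set f' : F → F := fun x => f x + ℓ x with hf'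
  have hf'0 : f' 0 = 0 := by
    simp [hf', hℓ0, hf0]
  have hfg' : ∀ x, g₂ (f' x) = 0 := by
    intro x
    have h1 : g₂ (f x) = g₁ x := zadd _ _ (hfg x)
    simp only [hf', hℓ]
    rw [map_add, h1, AddMonoidHom.map_nsmul, hu]
    generalize g₁ x = t
    revert t
    decide
  have htwo : (2 : F) = 0 := by
    have := CharTwo.two_eq_zero (R := F)
    exact_mod_cast this
  have hapn' : IsAPN f' := by
    intro a b hab
    have hset : {p : F × F | p.1 + p.2 = a ∧ f' p.1 + f' p.2 = b}
        = {p : F × F | p.1 + p.2 = a ∧ f p.1 + f p.2 = b + ℓ a} := by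
      ext p
      simp only [Set.mem_setOf_eq, hf']
      constructor
      · rintro ⟨h1, h2⟩
        refine ⟨h1, ?_⟩
        have hll : ℓ p.1 + ℓ p.2 = ℓ a := by rw [← hℓadd, h1]
        linear_combination h2 - hll - ℓ a * htwo
      · rintro ⟨h1, h2⟩
        refine ⟨h1, ?_⟩
        have hll : ℓ p.1 + ℓ p.2 = ℓ a := by rw [← hℓadd, h1]
        linear_combination h2 + hll + ℓ a * htwo
    rw [hset]
    apply hapn a (b + ℓ a)
    intro h
    rw [Prod.mk.injEq] at h
    by_cases ha : a = 0
    · apply hab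
      rw [Prod.mk.injEq]
      refine ⟨ha, ?_⟩
      have := h.2
      rw [ha, hℓ0, add_zero] at this
      exact this
    · exact ha h.1
  obtain ⟨χ, hχ0, hχg⟩ := exists_third hm hcard hchar g₂
  exact key_reduced hm hmodd hcard hchar f' hf'0 hapn' g₂ χ hg₂ hfg' hχ0 hχg

end Key

private lemma two_mul_add_one_le (m : ℕ) (hm : 3 ≤ m) : 2 * m + 1 ≤ 2 ^ m := by
  induction m with
  | zero => omega
  | succ k ih =>
    rcases Nat.lt_or_ge k 3 with hk | hk
    · have hk2 : k = 2 := by omega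
      subst hk2
      norm_num
    · have h1 := ih hk
      have h2 : 2 ^ 1 ≤ 2 ^ k := Nat.pow_le_pow_right (by norm_num) (by omega)
      rw [pow_one] at h2
      rw [pow_succ]
      omega

/-- If `f` is almost perfect nonlinear with `f 0 = 0`, then `C_f` is an
`𝔽₂`-subspace of `𝔽₂^n` of dimension `2^m - 2m - 1`. -/
theorem codeC_finrank_of_apn {m : ℕ} (hm : 0 < m) (hmodd : Odd m)
    {F : Type*} [Field F] [Fintype F] (hcard : Fintype.card F = 2 ^ m)
    (α : F) (hα : ∀ x : F, x ≠ 0 → ∃ k : ℕ, x = α ^ k)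
    (f : F → F) (hf0 : f 0 = 0) (hapn : IsAPN f) :
    ∃ S : Submodule (ZMod 2) (Fin (2 ^ m - 1) → ZMod 2),
      (S : Set (Fin (2 ^ m - 1) → ZMod 2)) = codeC (2 ^ m - 1) α f ∧
      Module.finrank (ZMod 2) S = 2 ^ m - 2 * m - 1 := by
  classical
  -- characteristic 2
  have hchar : CharP F 2 := by
    have hdvd : (ringChar F) ∣ 2 ^ m := by
      rw [← hcard]
      exact ringChar.dvd (by exact_mod_cast FiniteField.cast_card_eq_zero F)
    have hprime : (ringChar F).Prime := CharP.char_is_prime F (ringChar F)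
    have h2 : ringChar F = 2 := by
      have := hprime.dvd_of_dvd_pow hdvd
      rcases (Nat.dvd_prime Nat.prime_two).1 this with h | h
      · exact absurd h hprime.one_lt.ne'
      · exact h
    rw [← h2]
    exact ringChar.charP F
  haveI := hchar
  letI : Algebra (ZMod 2) F := ZMod.algebra _ _
  haveI : Module.Finite (ZMod 2) F := Module.finite_iff_finite.mpr inferInstance
  have zcases : ∀ t : ZMod 2, t = 0 ∨ t = 1 := by decide
  set n := 2 ^ m - 1 with hn
  have hnpos : 0 < n := by
    have : 2 ^ 1 ≤ 2 ^ m := Nat.pow_le_pow_right (by norm_num) hm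
    omega
  -- the parity-check linear map
  have hvs : ∀ (c d : ZMod 2) (v : F), ((c + d).val) • v = c.val • v + d.val • v := by
    intro c d v
    rcases zcases c with rfl | rfl <;> rcases zcases d with rfl | rfl <;>
      simp [ZMod.val_one]
    · ring
  let φ : (Fin n → ZMod 2) →ₗ[ZMod 2] F × F :=
    { toFun := fun v => (∑ i : Fin n, (v i).val • α ^ (i : ℕ),
        ∑ i : Fin n, (v i).val • f (α ^ (i : ℕ)))
      map_add' := by
        intro v w
        rw [Prod.mk_add_mk, Prod.mk.injEq]
        constructor <;>
        · rw [← Finset.sum_add_distrib]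
          exact Finset.sum_congr rfl fun i _ => by rw [Pi.add_apply, hvs]
      map_smul' := by
        intro c v
        rcases zcases c with rfl | rfl
        · simp
        · simp }
  refine ⟨LinearMap.ker φ, ?_, ?_⟩
  · ext v
    simp only [SetLike.mem_coe, LinearMap.mem_ker, codeC, Set.mem_setOf_eq]
    constructor
    · intro h
      exact ⟨congrArg Prod.fst h, congrArg Prod.snd h⟩
    · intro h
      exact Prod.ext h.1 h.2
  -- dimension count
  have hrn := LinearMap.finrank_range_add_finrank_ker φ
  have hdom : Module.finrank (ZMod 2) (Fin n → ZMod 2) = n := by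
    rw [Module.finrank_pi, Fintype.card_fin]
  rw [hdom] at hrn
  -- m = 1 or 3 ≤ m
  rcases (by obtain ⟨k, hk⟩ := hmodd; omega : m = 1 ∨ 3 ≤ m) with hm1 | hm3
  · -- m = 1 : the code is trivial
    have hker : LinearMap.ker φ = ⊥ := by
      rw [LinearMap.ker_eq_bot']
      intro v hv
      have hn1 : n = 1 := by rw [hn, hm1]; norm_num
      have h1 := congrArg Prod.fst hv
      simp only [φ, LinearMap.coe_mk, AddHom.coe_mk] at h1
      funext i
      have hi0 : (i : ℕ) = 0 := by omega
      have hsum : ∑ j : Fin n, (v j).val • α ^ (j : ℕ) = (v i).val • α ^ (i : ℕ) := by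
        apply Finset.sum_eq_single i
        · intro j _ hji
          exact absurd (Fin.ext (by omega)) hji
        · intro h
          exact absurd (Finset.mem_univ i) h
      rw [hsum, hi0, pow_zero] at h1
      rcases zcases (v i) with h | h
      · rw [h]; rfl
      · rw [h] at h1
        simp only [ZMod.val_one, one_smul] at h1
        exact absurd h1 one_ne_zero
    rw [hker, finrank_bot]
    rw [hm1]
    norm_num
  · -- main case : φ is surjective
    have hα0 : α ≠ 0 := by
      intro h0
      have h4 : 4 ≤ Fintype.card F := by
        rw [hcard]
        calc 4 = 2 ^ 2 := rfl
        _ ≤ 2 ^ m := Nat.pow_le_pow_right (by norm_num) (by omega)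
      have hsub : (Finset.univ : Finset F) ⊆ {0, 1} := by
        intro x _
        by_cases hx : x = 0
        · simp [hx]
        · obtain ⟨k, hk⟩ := hα x hx
          rw [h0] at hk
          rcases Nat.eq_zero_or_pos k with hk0 | hkp
          · rw [hk0, pow_zero] at hk
            simp [hk]
          · rw [zero_pow (by omega)] at hk
            exact absurd hk hx
      have := Finset.card_le_card hsub
      rw [Finset.card_univ] at this
      have : Fintype.card F ≤ 2 := le_trans this (Finset.card_insert_le _ _ |>.trans (by simp))
      omega
    have hαn : α ^ n = 1 := by
      have := FiniteField.pow_card_sub_one_eq_one α hα0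
      rwa [hcard] at this
    have hrange : LinearMap.range φ = ⊤ := by
      by_contra htop
      obtain ⟨p₀, hp₀⟩ : ∃ p₀ : F × F, p₀ ∉ LinearMap.range φ := by
        by_contra h
        push_neg at h
        exact htop (Submodule.eq_top_iff'.2 h)
      -- a nonzero functional vanishing on the range
      have hq0 : (LinearMap.range φ).mkQ p₀ ≠ 0 := by
        intro h
        exact hp₀ ((Submodule.Quotient.mk_eq_zero _).1 h)
      obtain ⟨ψ, hψ⟩ : ∃ ψ : Module.Dual (ZMod 2) ((F × F) ⧸ LinearMap.range φ),
          ψ ((LinearMap.range φ).mkQ p₀) ≠ 0 := by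
        by_contra h
        push_neg at h
        exact hq0 ((Module.forall_dual_apply_eq_zero_iff (ZMod 2) _).1 h)
      set g : (F × F) →ₗ[ZMod 2] ZMod 2 := ψ.comp (LinearMap.range φ).mkQ with hg
      have hgrange : ∀ w : Fin n → ZMod 2, g (φ w) = 0 := by
        intro w
        simp only [hg, LinearMap.comp_apply]
        have hz : (LinearMap.range φ).mkQ (φ w) = 0 := by
          rw [Submodule.mkQ_apply]
          exact (Submodule.Quotient.mk_eq_zero _).2 (LinearMap.mem_range_self φ w)
        rw [hz, map_zero]
      set g₁ : F →+ ZMod 2 := (g.comp (LinearMap.inl (ZMod 2) F F)).toAddMonoidHom with hg₁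
      set g₂ : F →+ ZMod 2 := (g.comp (LinearMap.inr (ZMod 2) F F)).toAddMonoidHom with hg₂
      have hgsplit : ∀ p : F × F, g p = g₁ p.1 + g₂ p.2 := by
        intro p
        have h := map_add g (p.1, (0 : F)) ((0 : F), p.2)
        have hp : (p.1, (0 : F)) + ((0 : F), p.2) = p := by
          rw [Prod.mk_add_mk, add_zero, zero_add]
        rw [hp] at h
        rw [h]
        rfl
      -- the single basis vectors
      have hφsingle : ∀ i : Fin n, φ (Pi.single i 1) = (α ^ (i : ℕ), f (α ^ (i : ℕ))) := by
        intro i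
        simp only [φ, LinearMap.coe_mk, AddHom.coe_mk]
        congr 1 <;>
        · rw [Finset.sum_eq_single i]
          · rw [Pi.single_eq_same]
            norm_num [ZMod.val_one]
          · intro j _ hji
            rw [Pi.single_eq_of_ne hji]
            simp
          · intro h
            exact absurd (Finset.mem_univ i) h
      have hall : ∀ x : F, g₁ x + g₂ (f x) = 0 := by
        intro x
        by_cases hx : x = 0
        · rw [hx, hf0, map_zero, map_zero, add_zero]
        · obtain ⟨k, hk⟩ := hα x hx
          have hkmod : α ^ k = α ^ (k % n) := by
            conv_lhs => rw [← Nat.div_add_mod k n]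
            rw [pow_add, pow_mul, hαn, one_pow, one_mul]
          have hi : k % n < n := Nat.mod_lt _ hnpos
          have h := hgrange (Pi.single (⟨k % n, hi⟩ : Fin n) 1)
          rw [hφsingle] at h
          rw [hgsplit] at h
          simp only at h
          rw [hk, hkmod]
          exact h
      have hgne : ¬(g₁ = 0 ∧ g₂ = 0) := by
        rintro ⟨h1, h2⟩
        apply hψ
        have : g p₀ = 0 := by
          rw [hgsplit, h1, h2]
          rfl
        simpa [hg] using this
      exact key hm3 hmodd hcard hchar f hf0 hapn g₁ g₂ hall hgne
    -- conclude
    have hFdim : Module.finrank (ZMod 2) F = m := by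
      have hcard2 : Fintype.card F = 2 ^ Module.finrank (ZMod 2) F := by
        rw [Module.card_eq_pow_finrank (K := ZMod 2) (V := F), ZMod.card]
      rw [hcard] at hcard2
      exact (Nat.pow_right_injective (le_refl 2) hcard2).symm
    have hrangedim : Module.finrank (ZMod 2) (LinearMap.range φ) = 2 * m := by
      rw [hrange]
      rw [finrank_top]
      rw [Module.finrank_prod, hFdim]
      omega
    rw [hrangedim] at hrn
    have h2m : 2 * m + 1 ≤ 2 ^ m := two_mul_add_one_le m hm3
    omega
end

section
/- Let m be an odd positive integer and F = 𝔽_{2^m}. A function f : F → F satisfies f(x) + f(y) + f(z) ≠ f(x+y+z) for all pairwise distinct x, y, z ∈ F if and only if f is almost perfect nonlinear. In particular, every crooked function is almost perfect nonlinear. -/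
/-- `f` is crooked: `f 0 = 0`; `f x + f y + f z ≠ f (x+y+z)` for pairwise
distinct `x, y, z`; and `f x + f y + f z ≠ f (x+a) + f (y+a) + f (z+a)`
for every `a ≠ 0`. -/
def IsCrooked {F : Type*} [Field F] (f : F → F) : Prop :=
  f 0 = 0 ∧
  (∀ x y z : F, x ≠ y → x ≠ z → y ≠ z → f x + f y + f z ≠ f (x + y + z)) ∧
  (∀ x y z a : F, a ≠ 0 → f x + f y + f z ≠ f (x + a) + f (y + a) + f (z + a))

/-- Condition (2) of crookedness is equivalent to almost perfect nonlinearity;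
in particular every crooked function is almost perfect nonlinear. -/
theorem cond_two_iff_apn {m : ℕ} (hm : 0 < m) (hmodd : Odd m)
    {F : Type*} [Field F] [Fintype F] (hcard : Fintype.card F = 2 ^ m)
    (f : F → F) :
    ((∀ x y z : F, x ≠ y → x ≠ z → y ≠ z → f x + f y + f z ≠ f (x + y + z)) ↔
      IsAPN f) ∧
    (IsCrooked f → IsAPN f) := by
  -- characteristic 2
  have hchar2 : ringChar F = 2 := by
    rcases FiniteField.card F (ringChar F) with ⟨n, hp, h⟩
    have hdvd : ringChar F ∣ 2 ^ m := by
      rw [← hcard, h]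
      exact dvd_pow_self _ (by exact_mod_cast n.2.ne')
    exact (Nat.prime_dvd_prime_iff_eq hp Nat.prime_two).mp (hp.dvd_of_dvd_pow hdvd)
  haveI : CharP F 2 := hchar2 ▸ ringChar.charP F
  have hself : ∀ x : F, x + x = 0 := fun x => CharTwo.add_self_eq_zero x
  have hcancel : ∀ x y : F, x + y = 0 → x = y := fun x y h => by
    have h' : x + (x + y) = x + 0 := by rw [h]
    rw [← add_assoc, hself, zero_add, add_zero] at h'
    exact h'.symm
  have main : (∀ x y z : F, x ≠ y → x ≠ z → y ≠ z → f x + f y + f z ≠ f (x + y + z)) ↔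
      IsAPN f := by
    constructor
    · intro h23 a b hab
      set S : Set (F × F) := {p : F × F | p.1 + p.2 = a ∧ f p.1 + f p.2 = b} with hS
      rcases S.eq_empty_or_nonempty with hE | ⟨⟨x, y⟩, hx, hfx⟩
      · simp [hE]
      have ha : a ≠ 0 := by
        rintro rfl
        have hxy : x = y := hcancel _ _ hx
        subst hxy
        exact hab (by simp [Prod.ext_iff, ← hfx, hself])
      have hsub : S ⊆ {(x, y), (y, x)} := by
        rintro ⟨u, v⟩ ⟨hu, hfu⟩
        have hxy : x ≠ y := fun h => ha (by rw [← hx, h, hself])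
        simp only [Set.mem_setOf_eq] at hu hfu
        simp only [Set.mem_setOf_eq] at hx hfx
        by_cases hux : u = x
        · subst hux
          have hv : v = y := add_left_cancel (hu.trans hx.symm)
          simp [hv]
        · by_cases huy : u = y
          · have hv : v = x :=
              add_left_cancel (show u + v = u + x from hu.trans (by rw [← hx, huy]; ring))
            simp [huy, hv]
          · exfalso
            -- x, y, u pairwise distinct, x + y + u = v
            have hv : x + y + u = v := by
              have : u + v = x + y := hu.trans hx.symm
              have h' : u + (u + v) = x + y + u := by rw [this]; ring
              rw [← add_assoc, hself, zero_add] at h'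
              exact h'.symm
            apply h23 x y u hxy (fun h => hux h.symm) (fun h => huy h.symm)
            rw [hv]
            calc f x + f y + f u = (f u + f v) + f u := by rw [hfx, ← hfu]
              _ = f v + (f u + f u) := by ring
              _ = f v := by rw [hself, add_zero]
        -- end
      calc S.ncard ≤ ({(x, y), (y, x)} : Set (F × F)).ncard :=
            Set.ncard_le_ncard hsub (Set.toFinite _)
        _ ≤ 2 := by
            have := Set.ncard_insert_le ((x, y) : F × F) {(y, x)}
            simpa using this
    · intro hapn x y z hxy hxz hyz hcontra
      set w := x + y + z with hw
      have ha : x + y ≠ 0 := fun h => hxy (hcancel _ _ h)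
      have h1 : ((x, y) : F × F) ∈ {p : F × F | p.1 + p.2 = x + y ∧ f p.1 + f p.2 = f x + f y} :=
        ⟨rfl, rfl⟩
      have h2 : ((y, x) : F × F) ∈ {p : F × F | p.1 + p.2 = x + y ∧ f p.1 + f p.2 = f x + f y} :=
        ⟨add_comm y x, add_comm (f y) (f x)⟩
      have h3 : ((z, w) : F × F) ∈ {p : F × F | p.1 + p.2 = x + y ∧ f p.1 + f p.2 = f x + f y} := by
        constructor
        · show z + w = x + y
          rw [hw]
          have : z + (x + y + z) = x + y + (z + z) := by ring
          rw [this, hself, add_zero]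
        · show f z + f w = f x + f y
          have : f w = f x + f y + f z := hcontra.symm
          rw [this]
          have : f z + (f x + f y + f z) = f x + f y + (f z + f z) := by ring
          rw [this, hself, add_zero]
      have hd12 : ((x, y) : F × F) ≠ (y, x) := fun h => hxy (congrArg Prod.fst h)
      have hd13 : ((x, y) : F × F) ≠ (z, w) := fun h => hxz (congrArg Prod.fst h)
      have hd23 : ((y, x) : F × F) ≠ (z, w) := fun h => hyz (congrArg Prod.fst h)
      have hle := hapn (x + y) (f x + f y) (by simp [Prod.ext_iff, ha])
      have h3le : ({((x,y) : F × F), (y,x), (z,w)} : Set (F × F)).ncard ≤ 2 := by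
        refine le_trans (Set.ncard_le_ncard ?_ (Set.toFinite _)) hle
        rintro p hp
        rcases hp with rfl | rfl | rfl
        · exact h1
        · exact h2
        · exact h3
      have : ({((x,y) : F × F), (y,x), (z,w)} : Set (F × F)).ncard = 3 := by
        rw [Set.ncard_insert_of_notMem (by simp [hd12, hd13]) (Set.toFinite _),
          Set.ncard_insert_of_notMem (by simp [hd23]) (Set.toFinite _),
          Set.ncard_singleton]
      omega
  exact ⟨main, fun hc => main.mp hc.2.1⟩
end

section
/- Let m be an odd positive integer and F = 𝔽_{2^m}. A function f : F → F is crooked if and only if f(0) = 0 and for every a ≠ 0 in F, the set H_a(f) := {f(x) + f(x+a) : x ∈ F} is the complement of an 𝔽₂-hyperplane of F, i.e., F ∖ H_a(f) is an 𝔽₂-subspace of F of dimension m − 1. -/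
open Finset

section Aux

variable {K : Type*} [Field K] [Fintype K] [DecidableEq K]

/-- Any module over `ZMod 2` satisfies `x + x = 0`. -/
lemma zmod2_add_self {M : Type*} [AddCommGroup M] [Module (ZMod 2) M] (x : M) :
    x + x = 0 := by
  calc x + x = (1 : ZMod 2) • x + (1 : ZMod 2) • x := by rw [one_smul]
    _ = ((1 + 1 : ZMod 2)) • x := (add_smul _ _ _).symm
    _ = (0 : ZMod 2) • x := by rw [show (1 + 1 : ZMod 2) = 0 from rfl]
    _ = 0 := zero_smul _ _

lemma fiber_eq_pair (g : K → K) (a : K) (ha : a ≠ 0)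
    (hg : ∀ x, g (x + a) = g x)
    (h2 : ∀ x z, g x = g z → z = x ∨ z = x + a) (x : K) :
    Finset.univ.filter (fun z => g z = g x) = {x, x + a} := by
  have hxx : x ≠ x + a := fun h => ha (left_eq_add.mp h)
  ext z
  simp only [Finset.mem_filter, Finset.mem_univ, true_and, Finset.mem_insert,
    Finset.mem_singleton]
  constructor
  · intro h; exact h2 x z h.symm
  · rintro (rfl | rfl)
    · rfl
    · exact hg x

lemma image_card_of_two_to_one (g : K → K) (a : K) (ha : a ≠ 0)
    (hg : ∀ x, g (x + a) = g x)
    (h2 : ∀ x z, g x = g z → z = x ∨ z = x + a) :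
    (Finset.univ.image g).card * 2 = Fintype.card K := by
  have key : Fintype.card K = ∑ b ∈ Finset.univ.image g,
      (Finset.univ.filter (fun x => g x = b)).card := by
    rw [← Finset.card_univ]
    exact Finset.card_eq_sum_card_fiberwise
      (fun x _ => Finset.mem_image_of_mem g (Finset.mem_univ x))
  have hfib : ∀ b ∈ Finset.univ.image g,
      (Finset.univ.filter (fun x => g x = b)).card = 2 := by
    intro b hb
    obtain ⟨x, -, rfl⟩ := Finset.mem_image.mp hb
    have hxx : x ≠ x + a := fun h => ha (left_eq_add.mp h)
    rw [fiber_eq_pair g a ha hg h2 x, Finset.card_insert_of_notMem (by simpa using hxx),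
      Finset.card_singleton]
  rw [key, Finset.sum_congr rfl hfib, Finset.sum_const, smul_eq_mul, mul_comm]

lemma two_to_one_of_image_card (g : K → K) (a : K) (ha : a ≠ 0)
    (hg : ∀ x, g (x + a) = g x)
    (hcard : (Finset.univ.image g).card * 2 = Fintype.card K) :
    ∀ x z, g x = g z → z = x ∨ z = x + a := by
  have key : Fintype.card K = ∑ b ∈ Finset.univ.image g,
      (Finset.univ.filter (fun x => g x = b)).card := by
    rw [← Finset.card_univ]
    exact Finset.card_eq_sum_card_fiberwise
      (fun x _ => Finset.mem_image_of_mem g (Finset.mem_univ x))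
  have hsub : ∀ w : K, ({w, w + a} : Finset K) ⊆
      Finset.univ.filter (fun x => g x = g w) := by
    intro w t ht
    simp only [Finset.mem_insert, Finset.mem_singleton] at ht
    simp only [Finset.mem_filter, Finset.mem_univ, true_and]
    rcases ht with rfl | rfl
    · rfl
    · exact hg w
  have hpair : ∀ w : K, ({w, w + a} : Finset K).card = 2 := by
    intro w
    rw [Finset.card_insert_of_notMem (by simpa using (fun h => ha (left_eq_add.mp h) : w ≠ w + a)),
      Finset.card_singleton]
  have hle : ∀ b ∈ Finset.univ.image g, 2 ≤ (Finset.univ.filter (fun x => g x = b)).card := by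
    intro b hb
    obtain ⟨w, -, rfl⟩ := Finset.mem_image.mp hb
    calc 2 = ({w, w + a} : Finset K).card := (hpair w).symm
      _ ≤ _ := Finset.card_le_card (hsub w)
  have hsum2 : ∑ _b ∈ Finset.univ.image g, 2 =
      ∑ b ∈ Finset.univ.image g, (Finset.univ.filter (fun x => g x = b)).card := by
    rw [Finset.sum_const, smul_eq_mul, ← key]; exact hcard
  have heach := (Finset.sum_eq_sum_iff_of_le hle).mp hsum2
  intro x z hxz
  have hx : g x ∈ Finset.univ.image g := Finset.mem_image_of_mem g (Finset.mem_univ x)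
  have hcard2 : (Finset.univ.filter (fun t => g t = g x)).card = 2 := (heach _ hx).symm
  have hfib : Finset.univ.filter (fun t => g t = g x) = {x, x + a} :=
    (Finset.eq_of_subset_of_card_le (hsub x) (by rw [hcard2, hpair x])).symm
  have hz : z ∈ Finset.univ.filter (fun t => g t = g x) := by
    simp only [Finset.mem_filter, Finset.mem_univ, true_and]; exact hxz.symm
  rw [hfib] at hz
  simpa using hz

lemma compl_add_closed (g : K → K) (hchar : ∀ x : K, x + x = 0)
    (hA3 : ∀ x y z : K, g x + g y ≠ g z)
    (hcard : (Finset.univ.image g).card * 2 = Fintype.card K)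
    {s t : K} (hs : ∀ x, g x ≠ s) (ht : ∀ x, g x ≠ t) :
    ∀ x, g x ≠ s + t := by
  set A := Finset.univ.image g with hA
  have hAcard : Aᶜ.card = A.card := by
    have h1 : A.card ≤ Fintype.card K := Finset.card_le_univ A
    rw [Finset.card_compl]
    omega
  have hmap : A.image (fun v => g 0 + v) ⊆ Aᶜ := by
    intro b hb
    simp only [Finset.mem_image] at hb
    obtain ⟨v, hv, rfl⟩ := hb
    obtain ⟨y, -, rfl⟩ := Finset.mem_image.mp hv
    rw [Finset.mem_compl]
    intro hmem
    obtain ⟨z, -, hz⟩ := Finset.mem_image.mp hmem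
    exact hA3 0 y z hz.symm
  have hinj : (A.image (fun v => g 0 + v)).card = A.card :=
    Finset.card_image_of_injective _ (add_right_injective _)
  have heq : A.image (fun v => g 0 + v) = Aᶜ :=
    Finset.eq_of_subset_of_card_le hmap (by rw [hAcard, hinj])
  have hsA : s ∈ Aᶜ := by
    rw [Finset.mem_compl]
    intro h
    obtain ⟨x, -, hx⟩ := Finset.mem_image.mp h
    exact hs x hx
  have htA : t ∈ Aᶜ := by
    rw [Finset.mem_compl]
    intro h
    obtain ⟨x, -, hx⟩ := Finset.mem_image.mp h
    exact ht x hx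
  rw [← heq] at hsA htA
  obtain ⟨v1, hv1, hs'⟩ := Finset.mem_image.mp hsA
  obtain ⟨y1, -, rfl⟩ := Finset.mem_image.mp hv1
  obtain ⟨v2, hv2, ht'⟩ := Finset.mem_image.mp htA
  obtain ⟨y2, -, rfl⟩ := Finset.mem_image.mp hv2
  intro x hx
  have : g y1 + g y2 = g x := by
    have h0 := hchar (g 0)
    linear_combination hs' + ht' - hx - h0
  exact hA3 y1 y2 x this

end Aux

lemma finrank_eq_of_ncard {M : Type*} [AddCommGroup M] [Module (ZMod 2) M] [Finite M]
    (H : Submodule (ZMod 2) M) {d : ℕ} (h : Nat.card ↥H = 2 ^ d) :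
    Module.finrank (ZMod 2) ↥H = d := by
  letI : Fintype ↥H := Fintype.ofFinite _
  have hpow := Module.card_eq_pow_finrank (K := ZMod 2) (V := ↥H)
  rw [ZMod.card, ← Nat.card_eq_fintype_card, h] at hpow
  exact Nat.pow_right_injective (le_refl 2) hpow.symm

lemma add_mem_of_notMem_of_notMem {M : Type*} [AddCommGroup M] [Module (ZMod 2) M]
    (H : Submodule (ZMod 2) M) (hQ : Nat.card (M ⧸ H) = 2)
    {u v : M} (hu : u ∉ H) (hv : v ∉ H) : u + v ∈ H := by
  obtain ⟨q, -, hq⟩ := (Nat.card_eq_two_iff' (0 : M ⧸ H)).mp hQ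
  have hu' : (Submodule.Quotient.mk u : M ⧸ H) ≠ 0 := by
    simpa [Submodule.Quotient.mk_eq_zero] using hu
  have hv' : (Submodule.Quotient.mk v : M ⧸ H) ≠ 0 := by
    simpa [Submodule.Quotient.mk_eq_zero] using hv
  have hmk : (Submodule.Quotient.mk u : M ⧸ H) = Submodule.Quotient.mk v :=
    (hq _ hu').trans (hq _ hv').symm
  have hsub : u - v ∈ H := (Submodule.Quotient.eq H).mp hmk
  have hneg : -v = v := neg_eq_of_add_eq_zero_left (zmod2_add_self v)
  rwa [sub_eq_add_neg, hneg] at hsub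

/-- `f` is crooked iff `f 0 = 0` and for every `a ≠ 0` the complement of
`H_a(f) = {f x + f (x+a) : x}` is an `𝔽₂`-hyperplane, i.e. an `𝔽₂`-subspace
of dimension `m - 1`. -/
theorem crooked_iff_Ha_hyperplane_complement {m : ℕ} (hm : 0 < m) (hmodd : Odd m)
    (f : GaloisField 2 m → GaloisField 2 m) :
    IsCrooked f ↔
      (f 0 = 0 ∧ ∀ a : GaloisField 2 m, a ≠ 0 →
        ∃ H : Submodule (ZMod 2) (GaloisField 2 m),
          Module.finrank (ZMod 2) H = m - 1 ∧
          (H : Set (GaloisField 2 m)) =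
            {b : GaloisField 2 m | ∃ x, b = f x + f (x + a)}ᶜ) := by
  classical
  letI : Fintype (GaloisField 2 m) := Fintype.ofFinite _
  have hK : Fintype.card (GaloisField 2 m) = 2 ^ m := by
    rw [← Nat.card_eq_fintype_card]; exact GaloisField.card 2 m hm.ne'
  have hchar : ∀ x : GaloisField 2 m, x + x = 0 := zmod2_add_self
  have e1 : (2 : ℕ) ^ m = 2 ^ (m - 1) * 2 := by
    rw [← pow_succ]; congr 1; omega
  have hfinK : Module.finrank (ZMod 2) (GaloisField 2 m) = m := by
    have h := Module.card_eq_pow_finrank (K := ZMod 2) (V := GaloisField 2 m)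
    rw [hK, ZMod.card] at h
    exact (Nat.pow_right_injective (le_refl 2) h.symm)
  constructor
  · rintro ⟨hf0, hf2, hf3⟩
    refine ⟨hf0, fun a ha => ?_⟩
    set g : GaloisField 2 m → GaloisField 2 m := fun x => f x + f (x + a) with hgdef
    have hg : ∀ x, g (x + a) = g x := by
      intro x
      show f (x + a) + f (x + a + a) = f x + f (x + a)
      rw [add_assoc x a a, hchar a, add_zero, add_comm (f (x + a)) (f x)]
    have h2 : ∀ x z, g x = g z → z = x ∨ z = x + a := by
      intro x z hgxz
      by_contra hcon
      push_neg at hcon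
      obtain ⟨h1, h2'⟩ := hcon
      have hxa : x ≠ x + a := fun h => ha (left_eq_add.mp h)
      apply hf2 x (x + a) z hxa (Ne.symm h1) (Ne.symm h2')
      have harg : x + (x + a) + z = z + a := by linear_combination hchar x
      rw [harg]
      have hgxz' : f x + f (x + a) = f z + f (z + a) := hgxz
      linear_combination hgxz' + hchar (f z)
    have hA0 : ∀ x, g x ≠ 0 := by
      intro x h
      have h' : f x + f (x + a) = 0 := h
      exact hf3 x x x a ha (by linear_combination 3 * h' - 3 * hchar (f (x + a)))
    have hA3 : ∀ x y z : GaloisField 2 m, g x + g y ≠ g z := by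
      intro x y z h
      have h' : (f x + f (x + a)) + (f y + f (y + a)) = f z + f (z + a) := h
      exact hf3 x y z a ha
        (by linear_combination h' - hchar (f (x + a)) - hchar (f (y + a)) + hchar (f z))
    have hcard := image_card_of_two_to_one g a ha hg h2
    set A : Finset (GaloisField 2 m) := Finset.univ.image g with hAdef
    have hAc : A.card = 2 ^ (m - 1) := by
      rw [hK, e1] at hcard
      exact Nat.eq_of_mul_eq_mul_right (by norm_num) hcard
    have hcompl : Aᶜ.card = 2 ^ (m - 1) := by
      have h1 : A.card ≤ Fintype.card (GaloisField 2 m) := Finset.card_le_univ A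
      rw [Finset.card_compl, hAc, hK, e1]
      omega
    have hmemc : ∀ s : GaloisField 2 m, s ∈ (↑(Aᶜ) : Set (GaloisField 2 m)) ↔ ∀ x, g x ≠ s := by
      intro s
      simp only [Finset.coe_compl, Set.mem_compl_iff, Finset.mem_coe, hAdef,
        Finset.mem_image, Finset.mem_univ, true_and, not_exists]
    let Hsub : Submodule (ZMod 2) (GaloisField 2 m) :=
      { carrier := ↑(Aᶜ)
        add_mem' := by
          intro s t hs ht
          rw [hmemc] at hs ht ⊢
          exact compl_add_closed g hchar hA3 hcard hs ht
        zero_mem' := by rw [hmemc]; exact hA0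
        smul_mem' := by
          intro c x hx
          have hc : c = 0 ∨ c = 1 := by revert c; decide
          rcases hc with rfl | rfl
          · rw [zero_smul, hmemc]; exact hA0
          · rw [one_smul]; exact hx }
    have hHset : (Hsub : Set (GaloisField 2 m)) = ↑(Aᶜ) := rfl
    have hmemH : ∀ x, x ∈ Hsub ↔ x ∈ Aᶜ := fun x => Iff.rfl
    refine ⟨Hsub, ?_, ?_⟩
    · -- finrank
      letI : Fintype ↥(Aᶜ) := FinsetCoe.fintype _
      apply finrank_eq_of_ncard
      have hc : Nat.card ↥Hsub = Aᶜ.card := by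
        rw [Nat.card_congr (Equiv.subtypeEquivRight fun x => hmemH x),
          Nat.card_eq_fintype_card, Fintype.card_coe]
      rw [hc, hcompl]
    · -- set equality
      rw [hHset]
      ext b
      simp only [Finset.coe_compl, Set.mem_compl_iff, Finset.mem_coe, hAdef,
        Finset.mem_image, Finset.mem_univ, true_and, Set.mem_setOf_eq, not_exists, hgdef]
      constructor
      · intro h x hx
        exact h x hx.symm
      · intro h x hx
        exact h x hx.symm
  · rintro ⟨hf0, hH⟩
    have key : ∀ a : GaloisField 2 m, a ≠ 0 → ∃ H : Submodule (ZMod 2) (GaloisField 2 m),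
        (∀ x, f x + f (x + a) ∉ H) ∧
        (∀ x z, f x + f (x + a) = f z + f (z + a) → z = x ∨ z = x + a) ∧
        Nat.card (GaloisField 2 m ⧸ H) = 2 := by
      intro a ha
      obtain ⟨H, hrank, hset⟩ := hH a ha
      set g : GaloisField 2 m → GaloisField 2 m := fun x => f x + f (x + a) with hgdef
      have hg : ∀ x, g (x + a) = g x := by
        intro x
        show f (x + a) + f (x + a + a) = f x + f (x + a)
        rw [add_assoc x a a, hchar a, add_zero, add_comm (f (x + a)) (f x)]
      have hnotmem : ∀ x, g x ∉ H := by
        intro x hx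
        rw [← SetLike.mem_coe, hset] at hx
        exact hx ⟨x, rfl⟩
      letI : Fintype ↥H := Fintype.ofFinite ↥H
      haveI : Module.Finite (ZMod 2) (GaloisField 2 m) := Module.Finite.of_finite
      have hrankQ : Module.finrank (ZMod 2) (GaloisField 2 m ⧸ H) = 1 := by
        have h := Submodule.finrank_quotient_add_finrank (R := ZMod 2) (M := GaloisField 2 m) H
        rw [hrank, hfinK] at h
        omega
      letI : Fintype (GaloisField 2 m ⧸ H) := Fintype.ofFinite _
      have hQ : Nat.card (GaloisField 2 m ⧸ H) = 2 := by
        have h := Module.card_eq_pow_finrank (K := ZMod 2) (V := GaloisField 2 m ⧸ H)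
        rw [ZMod.card, hrankQ, pow_one] at h
        rw [Nat.card_eq_fintype_card, h]
      set A : Finset (GaloisField 2 m) := Finset.univ.image g with hAdef
      have hsetA : (↑A : Set (GaloisField 2 m)) = {b | ∃ x, b = f x + f (x + a)} := by
        ext b
        simp only [Finset.mem_coe, hAdef, Finset.mem_image, Finset.mem_univ, true_and,
          Set.mem_setOf_eq, hgdef]
        constructor
        · rintro ⟨x, hx⟩; exact ⟨x, hx.symm⟩
        · rintro ⟨x, hx⟩; exact ⟨x, hx.symm⟩
      have hHA : (↑H : Set (GaloisField 2 m)) = (↑(Aᶜ) : Set (GaloisField 2 m)) := by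
        rw [hset, Finset.coe_compl, hsetA]
      have hcardH : Nat.card ↥H = 2 ^ (m - 1) := by
        have h := Module.card_eq_pow_finrank (K := ZMod 2) (V := ↥H)
        rw [ZMod.card, hrank] at h
        rw [Nat.card_eq_fintype_card, h]
      have hcompl : Aᶜ.card = 2 ^ (m - 1) := by
        have he : ↥H ≃ ↥(Aᶜ) := Equiv.subtypeEquivRight fun x => by
          rw [← SetLike.mem_coe, hHA, Finset.mem_coe]
        rw [← hcardH, Nat.card_congr he, Nat.card_eq_fintype_card, Fintype.card_coe]
      have hcard : A.card * 2 = Fintype.card (GaloisField 2 m) := by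
        have h1 : A.card ≤ Fintype.card (GaloisField 2 m) := Finset.card_le_univ A
        have h2 : Aᶜ.card = Fintype.card (GaloisField 2 m) - A.card := Finset.card_compl A
        rw [hK, e1]
        rw [hcompl, hK, e1] at h2
        omega
      exact ⟨H, hnotmem, two_to_one_of_image_card g a ha hg hcard, hQ⟩
    refine ⟨hf0, ?_, ?_⟩
    · -- condition (2)
      intro x y z hxy hxz hyz h
      have ha : x + y ≠ 0 := by
        intro h0
        exact hxy (by linear_combination h0 - hchar y)
      obtain ⟨H, hnotmem, h2to1, hQ⟩ := key (x + y) ha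
      have hgx : f x + f (x + (x + y)) = f z + f (z + (x + y)) := by
        have harg1 : x + (x + y) = y := by linear_combination hchar x
        have harg2 : z + (x + y) = x + y + z := by ring
        rw [harg1, harg2]
        linear_combination h - hchar (f z)
      rcases h2to1 x z hgx with rfl | rfl
      · exact hxz rfl
      · apply hyz
        linear_combination - hchar x
    · -- condition (3)
      intro x y z a ha h
      obtain ⟨H, hnotmem, h2to1, hQ⟩ := key a ha
      have hxy : (f x + f (x + a)) + (f y + f (y + a)) ∈ H :=
        add_mem_of_notMem_of_notMem H hQ (hnotmem x) (hnotmem y)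
      have hz : f z + f (z + a) = (f x + f (x + a)) + (f y + f (y + a)) := by
        linear_combination h + hchar (f (z + a)) - hchar (f x) - hchar (f y)
      exact hnotmem z (hz ▸ hxy)
end

section
/- Let m be an odd positive integer, F = 𝔽_{2^m}, and let j < k be natural numbers with gcd(k − j, m) = 1. Then the function f : F → F given by f(x) = x^{2^k + 2^j} is crooked. In particular, the Gold function f(x) = x^{2^k + 1} with gcd(k, m) = 1 is crooked. -/
open Function

theorem IsCrooked.comp_injective {F : Type*} [Field F] {f : F → F} (hf : IsCrooked f)
    (σ : F →+ F) (hσ : Injective σ) : IsCrooked (f ∘ σ) := by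
  obtain ⟨h0, hdistinct, hshift⟩ := hf
  refine ⟨by simp [h0], fun x y z hxy hxz hyz => ?_, fun x y z a ha => ?_⟩
  · simpa only [comp_apply, map_add] using
      hdistinct _ _ _ (hσ.ne hxy) (hσ.ne hxz) (hσ.ne hyz)
  · simpa only [comp_apply, map_add] using
      hshift (σ x) (σ y) (σ z) (σ a) fun h => ha (hσ (h.trans (map_zero σ).symm))

theorem FiniteField.pow_eq_self_of_pow_pow_eq_self {K : Type*} [Field K] [Fintype K]
    {p m n : ℕ} (hcard : Fintype.card K = p ^ m) (hnm : n.Coprime m) {x : K}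
    (hx : x ^ p ^ n = x) : x ^ p = x := by
  have hperiodic (k : ℕ) : IsPeriodicPt (· ^ p) k x ↔ x ^ p ^ k = x := by
    rw [IsPeriodicPt, IsFixedPt, pow_iterate]
  have hm : x ^ p ^ m = x := hcard ▸ FiniteField.pow_card x
  simpa [hnm.gcd_eq_one] using (hperiodic _).1 (((hperiodic n).2 hx).gcd ((hperiodic m).2 hm))

theorem FiniteField.eq_zero_or_one_of_pow_two_pow_eq_self {K : Type*} [Field K] [Fintype K]
    {m s : ℕ} (hcard : Fintype.card K = 2 ^ m) (hs : s.Coprime m) {x : K}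
    (hx : x ^ 2 ^ s = x) : x = 0 ∨ x = 1 :=
  eq_zero_or_one_of_sq_eq_self (pow_eq_self_of_pow_pow_eq_self hcard hs hx)

section CharTwo

variable {R : Type*} [CommRing R] [CharP R 2] (s : ℕ)

theorem add_pow_two_pow_add_one (a b : R) :
    (a + b) ^ (2 ^ s + 1) =
      a ^ (2 ^ s + 1) + b ^ (2 ^ s + 1) + (a ^ 2 ^ s * b + a * b ^ 2 ^ s) := by
  rw [pow_succ, add_pow_char_pow]
  ring

theorem gold_second_diff (x y z : R) :
    x ^ (2 ^ s + 1) + y ^ (2 ^ s + 1) + z ^ (2 ^ s + 1) + (x + y + z) ^ (2 ^ s + 1) =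
      (x + y) ^ 2 ^ s * (x + z) + (x + y) * (x + z) ^ 2 ^ s := by
  have h2 : (2 : R) = 0 := CharTwo.two_eq_zero
  simp only [pow_succ, add_pow_char_pow]
  linear_combination (y * y ^ 2 ^ s + z * z ^ 2 ^ s) * h2

theorem gold_shift_diff (x y z a : R) :
    x ^ (2 ^ s + 1) + y ^ (2 ^ s + 1) + z ^ (2 ^ s + 1) +
        ((x + a) ^ (2 ^ s + 1) + (y + a) ^ (2 ^ s + 1) + (z + a) ^ (2 ^ s + 1)) =
      (x + y + z) ^ 2 ^ s * a + (x + y + z) * a ^ 2 ^ s + a ^ (2 ^ s + 1) := by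
  have h2 : (2 : R) = 0 := CharTwo.two_eq_zero
  simp only [add_pow_two_pow_add_one, add_pow_char_pow]
  linear_combination (x ^ (2 ^ s + 1) + y ^ (2 ^ s + 1) + z ^ (2 ^ s + 1) + a ^ (2 ^ s + 1)) * h2

end CharTwo

section FiniteFieldCharTwo

variable {K : Type*} [Field K] [Fintype K] {m s : ℕ} (hcard : Fintype.card K = 2 ^ m)
  (hs : s.Coprime m)
include hcard hs

theorem eq_zero_or_eq_zero_or_eq_of_gold_polar_eq_zero [CharP K 2] {u v : K}
    (h : u ^ 2 ^ s * v + u * v ^ 2 ^ s = 0) : u = 0 ∨ v = 0 ∨ u = v := by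
  rcases eq_or_ne v 0 with hv | hv
  · exact Or.inr (Or.inl hv)
  have hfix : (u / v) ^ 2 ^ s = u / v := by
    rw [div_pow, div_eq_div_iff (pow_ne_zero _ hv) hv]
    exact CharTwo.add_eq_zero.1 h
  rcases FiniteField.eq_zero_or_one_of_pow_two_pow_eq_self hcard hs hfix with h0 | h1
  · exact Or.inl (by simpa [hv] using h0)
  · exact Or.inr (Or.inr ((div_eq_one_iff_eq hv).1 h1))

theorem pow_two_pow_add_self_add_one_ne_zero [CharP K 2] (hmodd : Odd m) (t : K) :
    t ^ 2 ^ s + t + 1 ≠ 0 := by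
  intro h
  have hq : t ^ 2 ^ s = t + 1 := CharTwo.add_eq_zero.1 (by rwa [← add_assoc])
  -- `t ↦ t ^ 2 ^ s` swaps `t` and `t + 1`, so `t` is fixed by its square
  have hfix : t ^ 2 ^ (2 * s) = t := by
    rw [two_mul, pow_add, pow_mul, hq, add_pow_char_pow, hq, one_pow, CharTwo.add_cancel_right]
  have hcop : (2 * s).Coprime m := Nat.Coprime.mul_left hmodd.coprime_two_left hs
  rcases FiniteField.eq_zero_or_one_of_pow_two_pow_eq_self hcard hcop hfix with rfl | rfl
  · simp at h
  · rw [one_pow, CharTwo.add_self_eq_zero, zero_add] at h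
    exact one_ne_zero h

theorem isCrooked_pow_two_pow_add_one (hmodd : Odd m) :
    IsCrooked fun x : K => x ^ (2 ^ s + 1) := by
  have : CharP K 2 := charP_of_card_eq_prime_pow hcard
  refine ⟨zero_pow (by positivity), fun x y z hxy hxz hyz h => ?_, fun x y z a ha h => ?_⟩
  · have hpolar := gold_second_diff s x y z
    rw [h, CharTwo.add_self_eq_zero] at hpolar
    rcases eq_zero_or_eq_zero_or_eq_of_gold_polar_eq_zero hcard hs hpolar.symm with h | h | h
    · exact hxy (CharTwo.add_eq_zero.1 h)
    · exact hxz (CharTwo.add_eq_zero.1 h)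
    · exact hyz (add_left_cancel h)
  · have hshift := gold_shift_diff s x y z a
    rw [h, CharTwo.add_self_eq_zero] at hshift
    apply pow_two_pow_add_self_add_one_ne_zero hcard hs hmodd ((x + y + z) / a)
    rw [div_pow]
    field_simp
    linear_combination -hshift

end FiniteFieldCharTwo

theorem gold_is_crooked_general {m : ℕ} (hmodd : Odd m)
    {F : Type*} [Field F] [Fintype F] (hcard : Fintype.card F = 2 ^ m) :
    (∀ j k : ℕ, j < k → Nat.gcd (k - j) m = 1 →
      IsCrooked (fun x : F => x ^ (2 ^ k + 2 ^ j))) ∧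
    (∀ k : ℕ, Nat.gcd k m = 1 → IsCrooked (fun x : F => x ^ (2 ^ k + 1))) := by
  have : CharP F 2 := charP_of_card_eq_prime_pow hcard
  refine ⟨fun j k hjk hkj => ?_, fun k hk => isCrooked_pow_two_pow_add_one hcard hk hmodd⟩
  convert (isCrooked_pow_two_pow_add_one hcard hkj hmodd).comp_injective
    (iterateFrobenius F 2 j : F →+ F) (iterateFrobenius F 2 j).injective using 1
  funext x
  rw [comp_apply, AddMonoidHom.coe_coe, iterateFrobenius_def, ← pow_mul, mul_add, ← pow_add,
    Nat.add_sub_cancel' hjk.le, mul_one]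

/-- For `j < k` with `gcd (k - j) m = 1`, the function `x ↦ x^(2^k + 2^j)` on
`𝔽_{2^m}` (`m` odd) is crooked; in particular the Gold function
`x ↦ x^(2^k + 1)` with `gcd k m = 1` is crooked. -/
theorem gold_is_crooked {m : ℕ} (hm : 0 < m) (hmodd : Odd m)
    {F : Type*} [Field F] [Fintype F] (hcard : Fintype.card F = 2 ^ m) :
    (∀ j k : ℕ, j < k → Nat.gcd (k - j) m = 1 →
      IsCrooked (fun x : F => x ^ (2 ^ k + 2 ^ j))) ∧
    (∀ k : ℕ, Nat.gcd k m = 1 → IsCrooked (fun x : F => x ^ (2 ^ k + 1))) :=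
  gold_is_crooked_general hmodd hcard
end

section
/- Let m be an odd positive integer, F = 𝔽_{2^m}, and let f : F → F be crooked. Then the crooked graph G_f is an antipodal distance-regular graph of diameter 3 with intersection array {2^{m+1} − 1, 2^{m+1} − 2, 1; 1, 2, 2^{m+1} − 1}: for any two vertices u, v at graph distance k (0 ≤ k ≤ 3), the number of neighbours of v at distance k+1 from u is b_k and the number at distance k−1 from u is c_k, where (b_0, b_1, b_2) = (2^{m+1}−1, 2^{m+1}−2, 1) and (c_1, c_2, c_3) = (1, 2, 2^{m+1}−1); moreover the relation 'equal or at distance 3' is an equivalence relation on the vertices. -/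
/-- The crooked graph `G_f` on `F × 𝔽₂ × F`: distinct vertices `(a, i, α)` and
`(b, j, β)` are adjacent iff `α + β = f (a+b) + (i+j+1)•(f a + f b)`, where the
scalar `i + j + 1 ∈ 𝔽₂` acts through its representative in `{0, 1} ⊆ ℕ`. -/
def crookedGraph {F : Type*} [Field F] (f : F → F) :
    SimpleGraph (F × ZMod 2 × F) :=
  SimpleGraph.fromRel fun u v =>
    u.2.2 + v.2.2 = f (u.1 + v.1) + (u.2.1 + v.2.1 + 1).val • (f u.1 + f v.1)

/-!
Put `π (a, i, α) = (a, i)`. Vertices `(p, α)` and `(q, β)` are adjacent iff `p ≠ q` and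
`α + β = W p q` for a symmetric weight `W` with `W p p = 0`; so `G_f` is a cover of the complete
graph on the `2 ^ (m + 1)` fibres, and the common neighbours of `(p, α)` and `(q, β)` correspond
to the fibres `r ∉ {p, q}` with `W p r + W q r = α + β`. Crookedness says exactly that
`r ↦ W p r + W q r` is two-to-one for `p ≠ q`: writing `p = (a, i)` and `q = (b, j)`, on each
sheet `F × {k}` it is a translate of `c ↦ f (a + c) + f (b + c) + f c` (injective) when `i ≠ j`,
and of `c ↦ f (a + c) + f (b + c)` (two-to-one, the two translates having no common value) when
`i = j`. As that level set contains `p` and `q` exactly when the two vertices are adjacent,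
adjacent vertices have no common neighbour and nonadjacent vertices of distinct fibres have two.
The rest holds for any such cover of a complete graph: vertices in one fibre are at distance `3`,
all others at distance at most `2`.
-/

theorem ZMod.eq_or_eq_add_one (i j : ZMod 2) : j = i ∨ j = i + 1 := by
  revert i j; decide

theorem Set.ncard_preimage_singleton_eq_of_le {α β : Type*} [Finite α] [Finite β] (g : α → β)
    {n : ℕ} (hcard : Nat.card α = n * Nat.card β) (hle : ∀ b, (g ⁻¹' {b}).ncard ≤ n) (b : β) :
    (g ⁻¹' {b}).ncard = n := by
  classical
  have := Fintype.ofFinite α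
  have := Fintype.ofFinite β
  have hfiber : ∀ b, (g ⁻¹' {b}).ncard = (Finset.univ.filter fun a => g a = b).card := fun b => by
    rw [Set.ncard_eq_toFinset_card']; congr; ext; simp
  have hsum : ∑ b, (g ⁻¹' {b}).ncard = ∑ _b : β, n := by
    rw [Finset.sum_const, Finset.card_univ, smul_eq_mul, ← Nat.card_eq_fintype_card, mul_comm,
      ← hcard, Nat.card_eq_fintype_card, ← Finset.card_univ,
      Finset.card_eq_sum_card_fiberwise (f := g) (t := Finset.univ) fun _ _ => Finset.mem_univ _]
    exact Finset.sum_congr rfl fun b _ => hfiber b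
  exact (Finset.sum_eq_sum_iff_of_le fun b _ => hle b).mp hsum b (Finset.mem_univ b)

theorem Set.ncard_setOf_prod_zmod_two {α : Type*} [Finite α] (P : α × ZMod 2 → Prop)
    (i : ZMod 2) : {r | P r}.ncard = {a | P (a, i)}.ncard + {a | P (a, i + 1)}.ncard := by
  have hsplit : {r | P r} = (·, i) '' {a | P (a, i)} ∪ (·, i + 1) '' {a | P (a, i + 1)} := by
    ext ⟨a, k⟩
    obtain rfl | rfl := ZMod.eq_or_eq_add_one i k <;> simp
  have hdisj : Disjoint ((·, i) '' {a | P (a, i)}) ((·, i + 1) '' {a | P (a, i + 1)}) := by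
    refine Set.disjoint_left.mpr ?_
    rintro _ ⟨a, -, rfl⟩ ⟨b, -, h⟩
    exact one_ne_zero (add_eq_left.mp (congrArg Prod.snd h))
  rw [hsplit, Set.ncard_union_eq hdisj, Set.ncard_image_of_injective _ (Prod.mk_left_injective i),
    Set.ncard_image_of_injective _ (Prod.mk_left_injective (i + 1))]

namespace SimpleGraph

variable {V B : Type*}

/-- A triangle-free antipodal cover of the complete graph on `B`, with fibres the level sets of
`π`, in which nonadjacent vertices of distinct fibres have exactly `c` common neighbours. -/
structure IsCompleteCover (G : SimpleGraph V) (π : V → B) (c : ℕ) : Prop where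
  ne_of_adj {u v : V} : G.Adj u v → π u ≠ π v
  existsUnique_adj (v : V) {b : B} : b ≠ π v → ∃! w, G.Adj v w ∧ π w = b
  commonNeighbors_eq_empty {u v : V} : G.Adj u v → G.commonNeighbors u v = ∅
  ncard_commonNeighbors {u v : V} :
    π u ≠ π v → ¬G.Adj u v → (G.commonNeighbors u v).ncard = c

namespace IsCompleteCover

variable {G : SimpleGraph V} {π : V → B} {c : ℕ} {u v w : V}

theorem eq_of_adj_of_adj (hG : G.IsCompleteCover π c) (hu : G.Adj w u) (hv : G.Adj w v)
    (h : π u = π v) : u = v :=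
  (hG.existsUnique_adj w (hG.ne_of_adj hv).symm).unique ⟨hu, h⟩ ⟨hv, rfl⟩

theorem commonNeighbors_eq_empty_of_map_eq (hG : G.IsCompleteCover π c) (hπ : π u = π v)
    (hne : u ≠ v) : G.commonNeighbors u v = ∅ :=
  Set.eq_empty_of_forall_notMem fun _ hw => hne (hG.eq_of_adj_of_adj hw.1.symm hw.2.symm hπ)

theorem edist_eq_two (hG : G.IsCompleteCover π c) (hc : c ≠ 0) (hπ : π u ≠ π v)
    (hadj : ¬G.Adj u v) : G.edist u v = 2 :=
  edist_eq_two_iff.mpr ⟨fun h => hπ (congrArg π h), hadj,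
    Set.nonempty_of_ncard_ne_zero (hG.ncard_commonNeighbors hπ hadj ▸ hc)⟩

theorem edist_eq_three [Nontrivial B] (hG : G.IsCompleteCover π c) (hc : c ≠ 0)
    (hπ : π u = π v) (hne : u ≠ v) : G.edist u v = 3 := by
  obtain ⟨b, hb⟩ := exists_ne (π u)
  obtain ⟨w, huw, rfl⟩ := (hG.existsUnique_adj u hb).exists
  have hwv : ¬G.Adj w v := fun hwv => hne (hG.eq_of_adj_of_adj huw.symm hwv hπ)
  have hlt : 2 < G.edist u v := two_lt_edist_iff.mpr
    ⟨hne, fun h => hG.ne_of_adj h hπ, hG.commonNeighbors_eq_empty_of_map_eq hπ hne⟩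
  refine le_antisymm ?_ (Order.add_one_le_of_lt hlt)
  calc G.edist u v ≤ G.edist u w + G.edist w v := G.edist_triangle
    _ = 3 := by rw [edist_eq_one_iff_adj.mpr huw, hG.edist_eq_two hc (hπ ▸ hb) hwv]; rfl

theorem edist_le_three [Nontrivial B] (hG : G.IsCompleteCover π c) (hc : c ≠ 0) (u v : V) :
    G.edist u v ≤ 3 := by
  by_cases huv : u = v
  · simp [huv]
  by_cases hadj : G.Adj u v
  · rw [edist_eq_one_iff_adj.mpr hadj]; norm_num
  by_cases hπ : π u = π v
  · rw [hG.edist_eq_three hc hπ huv]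
  · rw [hG.edist_eq_two hc hπ hadj]; norm_num

theorem connected [Nonempty V] [Nontrivial B] (hG : G.IsCompleteCover π c) (hc : c ≠ 0) :
    G.Connected :=
  (connected_iff G).mpr ⟨fun u v => reachable_of_edist_ne_top
    (ne_top_of_le_ne_top (by decide) (hG.edist_le_three hc u v)), inferInstance⟩

theorem dist_le_three [Nontrivial B] (hG : G.IsCompleteCover π c) (hc : c ≠ 0) (u v : V) :
    G.dist u v ≤ 3 :=
  ENat.toNat_le_of_le_natCast (hG.edist_le_three hc u v)

theorem dist_eq_two_iff [Nontrivial B] (hG : G.IsCompleteCover π c) (hc : c ≠ 0) :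
    G.dist u v = 2 ↔ π u ≠ π v ∧ ¬G.Adj u v := by
  refine ⟨fun h => ?_, fun h => by rw [dist, hG.edist_eq_two hc h.1 h.2]; rfl⟩
  have hadj : ¬G.Adj u v := fun hadj => by simp [dist_eq_one_iff_adj.mpr hadj] at h
  refine ⟨fun hπ => ?_, hadj⟩
  have hne : u ≠ v := by rintro rfl; simp at h
  simp [dist, hG.edist_eq_three hc hπ hne] at h

theorem dist_eq_three_iff [Nontrivial B] (hG : G.IsCompleteCover π c) (hc : c ≠ 0) :
    G.dist u v = 3 ↔ π u = π v ∧ u ≠ v := by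
  refine ⟨fun h => ?_, fun h => by rw [dist, hG.edist_eq_three hc h.1 h.2]; rfl⟩
  have hne : u ≠ v := by rintro rfl; simp at h
  refine ⟨by_contra fun hπ => ?_, hne⟩
  have hadj : ¬G.Adj u v := fun hadj => by simp [dist_eq_one_iff_adj.mpr hadj] at h
  simp [(hG.dist_eq_two_iff hc).mpr ⟨hπ, hadj⟩] at h

theorem equivalence_eq_or_dist_eq_three [Nontrivial B] (hG : G.IsCompleteCover π c)
    (hc : c ≠ 0) : Equivalence fun u v => u = v ∨ G.dist u v = 3 := by
  have hker : ∀ u v, u = v ∨ G.dist u v = 3 ↔ π u = π v := fun u v => by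
    rw [hG.dist_eq_three_iff hc]
    by_cases huv : u = v <;> simp [huv]
  simp only [hker]
  exact (Setoid.ker π).iseqv

theorem ncard_neighborSet [Finite B] (hG : G.IsCompleteCover π c) (v : V) :
    (G.neighborSet v).ncard = Nat.card B - 1 := by
  have himage : π '' G.neighborSet v = {π v}ᶜ := by
    ext b
    refine ⟨?_, fun hb => ?_⟩
    · rintro ⟨w, hw, rfl⟩
      exact (hG.ne_of_adj hw).symm
    · obtain ⟨w, hw, rfl⟩ := (hG.existsUnique_adj v hb).exists
      exact ⟨w, hw, rfl⟩
  have hinj : (G.neighborSet v).InjOn π := fun _ hw _ hw' h => hG.eq_of_adj_of_adj hw hw' h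
  rw [← hinj.ncard_image, himage, Set.ncard_compl, Set.ncard_singleton]

theorem ncard_adj_dist_one_of_dist_zero [Nonempty V] [Finite B] [Nontrivial B]
    (hG : G.IsCompleteCover π c) (hc : c ≠ 0) (h : G.dist u v = 0) :
    {w | G.Adj v w ∧ G.dist u w = 1}.ncard = Nat.card B - 1 := by
  obtain rfl := (hG.connected hc).dist_eq_zero_iff.mp h
  simp only [dist_eq_one_iff_adj, and_self]
  exact hG.ncard_neighborSet u

theorem ncard_adj_dist_zero_of_dist_one [Nonempty V] [Nontrivial B]
    (hG : G.IsCompleteCover π c) (hc : c ≠ 0) (h : G.dist u v = 1) :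
    {w | G.Adj v w ∧ G.dist u w = 0}.ncard = 1 := by
  refine Set.ncard_eq_one.mpr ⟨u, Set.ext fun w => ?_⟩
  simp only [Set.mem_ofPred_eq, Set.mem_singleton_iff, (hG.connected hc).dist_eq_zero_iff]
  exact ⟨fun hw => hw.2.symm, fun hw => ⟨hw ▸ (dist_eq_one_iff_adj.mp h).symm, hw.symm⟩⟩

theorem ncard_adj_dist_two_of_dist_one [Finite B] [Nontrivial B]
    (hG : G.IsCompleteCover π c) (hc : c ≠ 0) (h : G.dist u v = 1) :
    {w | G.Adj v w ∧ G.dist u w = 2}.ncard = Nat.card B - 2 := by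
  have huv := dist_eq_one_iff_adj.mp h
  have hset : {w | G.Adj v w ∧ G.dist u w = 2} = G.neighborSet v \ {u} := by
    ext w
    simp only [Set.mem_ofPred_eq, Set.mem_sdiff, mem_neighborSet, Set.mem_singleton_iff,
      hG.dist_eq_two_iff hc]
    refine and_congr_right fun hvw => ⟨?_, fun hwu => ⟨?_, fun huw => ?_⟩⟩
    · rintro ⟨hπ, -⟩ rfl
      exact hπ rfl
    · exact fun hπ => hwu (hG.eq_of_adj_of_adj hvw huv.symm hπ.symm)
    · exact (hG.commonNeighbors_eq_empty huv).subset ⟨huw, hvw⟩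
  rw [hset, Set.ncard_sdiff_singleton_of_mem (show u ∈ G.neighborSet v from huv.symm),
    hG.ncard_neighborSet]
  omega

theorem ncard_adj_dist_three_of_dist_two [Nontrivial B] (hG : G.IsCompleteCover π c)
    (hc : c ≠ 0) (h : G.dist u v = 2) : {w | G.Adj v w ∧ G.dist u w = 3}.ncard = 1 := by
  obtain ⟨hπ, hadj⟩ := (hG.dist_eq_two_iff hc).mp h
  obtain ⟨w₀, ⟨hvw₀, hw₀⟩, huniq⟩ := hG.existsUnique_adj v hπ
  refine Set.ncard_eq_one.mpr ⟨w₀, Set.ext fun w => ?_⟩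
  simp only [Set.mem_ofPred_eq, Set.mem_singleton_iff, hG.dist_eq_three_iff hc]
  refine ⟨fun hw => huniq w ⟨hw.1, hw.2.1.symm⟩, ?_⟩
  rintro rfl
  exact ⟨hvw₀, hw₀.symm, by rintro rfl; exact hadj hvw₀.symm⟩

theorem ncard_adj_dist_one_of_dist_two [Nontrivial B] (hG : G.IsCompleteCover π c)
    (hc : c ≠ 0) (h : G.dist u v = 2) : {w | G.Adj v w ∧ G.dist u w = 1}.ncard = c := by
  obtain ⟨hπ, hadj⟩ := (hG.dist_eq_two_iff hc).mp h
  rw [← hG.ncard_commonNeighbors hπ hadj]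
  congr 1
  ext w
  simp only [Set.mem_ofPred_eq, mem_commonNeighbors, dist_eq_one_iff_adj, and_comm]

theorem ncard_adj_dist_two_of_dist_three [Finite B] [Nontrivial B]
    (hG : G.IsCompleteCover π c) (hc : c ≠ 0) (h : G.dist u v = 3) :
    {w | G.Adj v w ∧ G.dist u w = 2}.ncard = Nat.card B - 1 := by
  obtain ⟨hπ, hne⟩ := (hG.dist_eq_three_iff hc).mp h
  rw [← hG.ncard_neighborSet v]
  congr 1
  ext w
  simp only [Set.mem_ofPred_eq, mem_neighborSet, hG.dist_eq_two_iff hc, and_iff_left_iff_imp]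
  exact fun hvw => ⟨hπ ▸ hG.ne_of_adj hvw,
    fun huw => hne (hG.eq_of_adj_of_adj huw.symm hvw.symm hπ)⟩

end IsCompleteCover

end SimpleGraph

namespace IsCrooked

variable {F : Type*} [Field F] [CharP F 2] {f : F → F}

theorem injective_add_add (hf : IsCrooked f) (a b : F) :
    Function.Injective fun c => f (a + c) + f (b + c) + f c := by
  intro c c' h
  by_contra hne
  refine hf.2.2 (a + c) (b + c) c (c + c') (fun h0 => hne (by grind)) ?_
  rw [show a + c + (c + c') = a + c' by grind, show b + c + (c + c') = b + c' by grind,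
    show c + (c + c') = c' by grind]
  exact h

theorem eq_or_eq_add_add_of_add_eq (hf : IsCrooked f) {a b c c' : F} (hab : a ≠ b)
    (h : f (a + c) + f (b + c) = f (a + c') + f (b + c')) : c' = c ∨ c' = c + (a + b) := by
  by_contra! hne
  refine hf.2.1 (a + c) (a + c') (b + c) (fun h0 => hne.1 (by grind)) (fun h0 => hab (by grind))
    (fun h0 => hne.2 (by grind)) ?_
  rw [show a + c + (a + c') + (b + c) = b + c' by grind]
  grind

theorem add_add_ne (hf : IsCrooked f) {a b : F} (hab : a ≠ b) (c₁ c₂ c₃ : F) :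
    f (a + c₁) + f (b + c₁) + (f (a + c₂) + f (b + c₂)) ≠ f (a + c₃) + f (b + c₃) := by
  intro h
  refine hf.2.2 (a + c₁) (a + c₂) (a + c₃) (a + b) (fun h0 => hab (by grind)) ?_
  rw [show a + c₁ + (a + b) = b + c₁ by grind, show a + c₂ + (a + b) = b + c₂ by grind,
    show a + c₃ + (a + b) = b + c₃ by grind]
  grind

theorem ncard_add_eq_le_two (hf : IsCrooked f) {a b : F} (hab : a ≠ b) (s : F) :
    {c | f (a + c) + f (b + c) = s}.ncard ≤ 2 := by
  rcases Set.eq_empty_or_nonempty {c | f (a + c) + f (b + c) = s} with h | ⟨c₀, hc₀⟩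
  · simp [h]
  calc {c | f (a + c) + f (b + c) = s}.ncard ≤ ({c₀, c₀ + (a + b)} : Set F).ncard :=
        Set.ncard_le_ncard fun c hc => hf.eq_or_eq_add_add_of_add_eq hab (hc₀.trans hc.symm)
    _ ≤ 2 := (Set.ncard_insert_le _ _).trans (by rw [Set.ncard_singleton])

theorem ncard_add_eq_add_ncard_add_eq_le_two (hf : IsCrooked f) {a b : F} (hab : a ≠ b)
    (s : F) : {c | f (a + c) + f (b + c) = s + (f a + f b)}.ncard +
      {c | f (a + c) + f (b + c) = s}.ncard ≤ 2 := by
  rcases Set.eq_empty_or_nonempty {c | f (a + c) + f (b + c) = s + (f a + f b)} with h | ⟨c₁, hc₁⟩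
  · rw [h, Set.ncard_empty, zero_add]
    exact hf.ncard_add_eq_le_two hab s
  have hc₁ : f (a + c₁) + f (b + c₁) = s + (f a + f b) := hc₁
  have h : {c | f (a + c) + f (b + c) = s} = ∅ := by
    refine Set.eq_empty_of_forall_notMem fun c₂ (hc₂ : _ = s) => hf.add_add_ne hab c₁ c₂ 0 ?_
    rw [hc₁, hc₂, add_zero, add_zero]
    grind
  rw [h, Set.ncard_empty, add_zero]
  exact hf.ncard_add_eq_le_two hab _

end IsCrooked

section CrookedGraph

variable {F : Type*} [Field F] {f : F → F}

/-- The edge rule of `crookedGraph f` between the fibres `p` and `q` (`crookedGraph_adj_iff`). -/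
def crookedWeight (f : F → F) (p q : F × ZMod 2) : F :=
  f (p.1 + q.1) + (p.2 + q.2 + 1).val • (f p.1 + f q.1)

theorem crookedWeight_comm (f : F → F) (p q : F × ZMod 2) :
    crookedWeight f p q = crookedWeight f q p := by
  simp only [crookedWeight, add_comm]

theorem crookedWeight_same (a c : F) (i : ZMod 2) :
    crookedWeight f (a, i) (c, i) = f (a + c) + (f a + f c) := by
  have hval : (i + i + 1).val = 1 := by revert i; decide
  simp [crookedWeight, hval]

theorem crookedWeight_add_one (a c : F) (i : ZMod 2) :
    crookedWeight f (a, i) (c, i + 1) = f (a + c) := by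
  have hval : (i + (i + 1) + 1).val = 0 := by revert i; decide
  simp [crookedWeight, hval]

theorem crookedWeight_add_one_left (a c : F) (i : ZMod 2) :
    crookedWeight f (a, i + 1) (c, i) = f (a + c) := by
  rw [crookedWeight_comm, crookedWeight_add_one, add_comm]

variable [CharP F 2]

theorem crookedWeight_self (hf0 : f 0 = 0) (p : F × ZMod 2) : crookedWeight f p p = 0 := by
  rw [crookedWeight_same, CharTwo.add_self_eq_zero, hf0, CharTwo.add_self_eq_zero, add_zero]

theorem IsCrooked.ncard_crookedWeight_add_eq_le_two [Finite F] (hf : IsCrooked f)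
    {p q : F × ZMod 2} (hpq : p ≠ q) (t : F) :
    {r | crookedWeight f p r + crookedWeight f q r = t}.ncard ≤ 2 := by
  obtain ⟨a, i⟩ := p
  obtain ⟨b, j⟩ := q
  rw [Set.ncard_setOf_prod_zmod_two _ i]
  obtain rfl | rfl := ZMod.eq_or_eq_add_one i j
  · have hab : a ≠ b := fun h => hpq (h ▸ rfl)
    simp only [crookedWeight_same, crookedWeight_add_one]
    have hshift : {c | f (a + c) + (f a + f c) + (f (b + c) + (f b + f c)) = t} =
        {c | f (a + c) + f (b + c) = t + (f a + f b)} := by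
      ext c
      exact ⟨fun h => by grind, fun h => by grind⟩
    rw [hshift]
    exact hf.ncard_add_eq_add_ncard_add_eq_le_two hab t
  · have hsheet : ∀ e : F, {c | f (a + c) + f (b + c) + f c = e}.ncard ≤ 1 := fun e =>
      Set.ncard_le_one_iff_subsingleton.mpr fun c (hc : _ = e) c' (hc' : _ = e) =>
        hf.injective_add_add a b (hc.trans hc'.symm)
    simp only [crookedWeight_same, crookedWeight_add_one, crookedWeight_add_one_left]
    have h₁ : {c | f (a + c) + (f a + f c) + f (b + c) = t} =
        {c | f (a + c) + f (b + c) + f c = t + f a} := by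
      ext c
      exact ⟨fun h => by grind, fun h => by grind⟩
    have h₂ : {c | f (a + c) + (f (b + c) + (f b + f c)) = t} =
        {c | f (a + c) + f (b + c) + f c = t + f b} := by
      ext c
      exact ⟨fun h => by grind, fun h => by grind⟩
    rw [h₁, h₂]
    exact add_le_add (hsheet _) (hsheet _)

theorem IsCrooked.ncard_crookedWeight_add_eq [Finite F] (hf : IsCrooked f) {p q : F × ZMod 2}
    (hpq : p ≠ q) (t : F) : {r | crookedWeight f p r + crookedWeight f q r = t}.ncard = 2 :=
  Set.ncard_preimage_singleton_eq_of_le (fun r => crookedWeight f p r + crookedWeight f q r)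
    (by rw [Nat.card_prod, Nat.card_zmod, mul_comm]) (hf.ncard_crookedWeight_add_eq_le_two hpq) t

theorem crookedGraph_adj_iff (hf0 : f 0 = 0) {u v : F × ZMod 2 × F} :
    (crookedGraph f).Adj u v ↔ (u.1, u.2.1) ≠ (v.1, v.2.1) ∧
      u.2.2 + v.2.2 = crookedWeight f (u.1, u.2.1) (v.1, v.2.1) := by
  rw [crookedGraph, SimpleGraph.fromRel_adj]
  change u ≠ v ∧ (u.2.2 + v.2.2 = crookedWeight f (u.1, u.2.1) (v.1, v.2.1) ∨
    v.2.2 + u.2.2 = crookedWeight f (v.1, v.2.1) (u.1, u.2.1)) ↔ _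
  rw [add_comm v.2.2, crookedWeight_comm f (v.1, v.2.1), or_self]
  refine and_congr_left fun h => ⟨fun hne hπ => hne ?_, fun hπ huv => hπ (huv ▸ rfl)⟩
  rw [hπ, crookedWeight_self hf0, CharTwo.add_eq_iff_eq_add, zero_add] at h
  rw [Prod.mk.injEq] at hπ
  exact Prod.ext hπ.1 (Prod.ext hπ.2 h)

theorem crookedGraph_commonNeighbors (hf0 : f 0 = 0) (u v : F × ZMod 2 × F) :
    (crookedGraph f).commonNeighbors u v =
      (fun r => (r.1, r.2, u.2.2 + crookedWeight f (u.1, u.2.1) r)) ''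
        ({r | crookedWeight f (u.1, u.2.1) r + crookedWeight f (v.1, v.2.1) r = u.2.2 + v.2.2} \
          {(u.1, u.2.1), (v.1, v.2.1)}) := by
  ext w
  rw [SimpleGraph.mem_commonNeighbors, crookedGraph_adj_iff hf0, crookedGraph_adj_iff hf0]
  constructor
  · rintro ⟨⟨hu, hγu⟩, hv, hγv⟩
    refine ⟨(w.1, w.2.1), ⟨by grind, ?_⟩, Prod.ext rfl (Prod.ext rfl (by grind))⟩
    rintro (h | h)
    exacts [hu h.symm, hv h.symm]
  · rintro ⟨r, ⟨hr, hnot⟩, rfl⟩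
    refine ⟨⟨fun h => hnot (Or.inl h.symm), by grind⟩, fun h => hnot (Or.inr h.symm), by grind⟩

theorem IsCrooked.isCompleteCover_crookedGraph [Finite F] (hf : IsCrooked f) :
    (crookedGraph f).IsCompleteCover (fun v => (v.1, v.2.1)) 2 where
  ne_of_adj h := ((crookedGraph_adj_iff hf.1).mp h).1
  existsUnique_adj v p hp := by
    refine ⟨(p.1, p.2, v.2.2 + crookedWeight f (v.1, v.2.1) p),
      ⟨(crookedGraph_adj_iff hf.1).mpr ⟨hp.symm, by grind⟩, rfl⟩, ?_⟩
    rintro w ⟨hw, rfl⟩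
    have hγ := ((crookedGraph_adj_iff hf.1).mp hw).2
    exact Prod.ext rfl (Prod.ext rfl (by grind))
  commonNeighbors_eq_empty {u v} h := by
    obtain ⟨hπ, huv⟩ := (crookedGraph_adj_iff hf.1).mp h
    rw [crookedGraph_commonNeighbors hf.1, Set.image_eq_empty, Set.sdiff_eq_empty]
    have hsub : {(u.1, u.2.1), (v.1, v.2.1)} ⊆ {r | crookedWeight f (u.1, u.2.1) r +
        crookedWeight f (v.1, v.2.1) r = u.2.2 + v.2.2} := by
      rintro r (rfl | rfl)
      · rw [Set.mem_ofPred_eq, crookedWeight_self hf.1, zero_add, crookedWeight_comm, huv]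
      · rw [Set.mem_ofPred_eq, crookedWeight_self hf.1, add_zero, huv]
    refine (Set.eq_of_subset_of_ncard_le hsub ?_).symm.subset
    rw [hf.ncard_crookedWeight_add_eq hπ, Set.ncard_pair hπ]
  ncard_commonNeighbors {u v} hπ hadj := by
    have hinj : Function.Injective fun r : F × ZMod 2 =>
        ((r.1, r.2, u.2.2 + crookedWeight f (u.1, u.2.1) r) : F × ZMod 2 × F) :=
      fun _ _ h => Prod.ext (congrArg (fun w : F × ZMod 2 × F => w.1) h)
        (congrArg (fun w => w.2.1) h)
    have hdisj : Disjoint {r | crookedWeight f (u.1, u.2.1) r +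
        crookedWeight f (v.1, v.2.1) r = u.2.2 + v.2.2} {(u.1, u.2.1), (v.1, v.2.1)} := by
      refine Set.disjoint_right.mpr ?_
      rintro r (rfl | rfl) hr <;> refine hadj ((crookedGraph_adj_iff hf.1).mpr ⟨hπ, ?_⟩)
      · rw [Set.mem_ofPred_eq, crookedWeight_self hf.1, zero_add, crookedWeight_comm] at hr
        exact hr.symm
      · rw [Set.mem_ofPred_eq, crookedWeight_self hf.1, add_zero] at hr
        exact hr.symm
    rw [crookedGraph_commonNeighbors hf.1, Set.ncard_image_of_injective _ hinj,
      sdiff_eq_left.mpr hdisj, hf.ncard_crookedWeight_add_eq hπ]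

end CrookedGraph

theorem crookedGraph_distance_regular_general {m : ℕ}
    {F : Type*} [Field F] [Fintype F] (hcard : Fintype.card F = 2 ^ m)
    (f : F → F) (hf : IsCrooked f) :
    (crookedGraph f).Connected ∧
    (∀ u v : F × ZMod 2 × F, (crookedGraph f).dist u v ≤ 3) ∧
    (∀ u v : F × ZMod 2 × F, (crookedGraph f).dist u v = 0 →
      {w | (crookedGraph f).Adj v w ∧ (crookedGraph f).dist u w = 1}.ncard =
        2 ^ (m + 1) - 1) ∧
    (∀ u v : F × ZMod 2 × F, (crookedGraph f).dist u v = 1 →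
      {w | (crookedGraph f).Adj v w ∧ (crookedGraph f).dist u w = 2}.ncard =
        2 ^ (m + 1) - 2 ∧
      {w | (crookedGraph f).Adj v w ∧ (crookedGraph f).dist u w = 0}.ncard = 1) ∧
    (∀ u v : F × ZMod 2 × F, (crookedGraph f).dist u v = 2 →
      {w | (crookedGraph f).Adj v w ∧ (crookedGraph f).dist u w = 3}.ncard = 1 ∧
      {w | (crookedGraph f).Adj v w ∧ (crookedGraph f).dist u w = 1}.ncard = 2) ∧
    (∀ u v : F × ZMod 2 × F, (crookedGraph f).dist u v = 3 →
      {w | (crookedGraph f).Adj v w ∧ (crookedGraph f).dist u w = 2}.ncard =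
        2 ^ (m + 1) - 1) ∧
    Equivalence (fun u v : F × ZMod 2 × F =>
      u = v ∨ (crookedGraph f).dist u v = 3) := by
  have : CharP F 2 := charP_of_card_eq_prime_pow hcard
  have hG := hf.isCompleteCover_crookedGraph
  have hB : Nat.card (F × ZMod 2) = 2 ^ (m + 1) := by
    rw [Nat.card_prod, Nat.card_eq_fintype_card, hcard, Nat.card_zmod, pow_succ]
  have hc : (2 : ℕ) ≠ 0 := two_ne_zero
  rw [← hB]
  exact ⟨hG.connected hc, hG.dist_le_three hc,
    fun _ _ h => hG.ncard_adj_dist_one_of_dist_zero hc h,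
    fun _ _ h => ⟨hG.ncard_adj_dist_two_of_dist_one hc h, hG.ncard_adj_dist_zero_of_dist_one hc h⟩,
    fun _ _ h => ⟨hG.ncard_adj_dist_three_of_dist_two hc h, hG.ncard_adj_dist_one_of_dist_two hc h⟩,
    fun _ _ h => hG.ncard_adj_dist_two_of_dist_three hc h,
    hG.equivalence_eq_or_dist_eq_three hc⟩

/-- If `f` is crooked then `G_f` is an antipodal distance-regular graph of
diameter `3` with intersection array
`{2^(m+1) - 1, 2^(m+1) - 2, 1; 1, 2, 2^(m+1) - 1}`. -/
theorem crookedGraph_distance_regular {m : ℕ} (hm : 0 < m) (hmodd : Odd m)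
    {F : Type*} [Field F] [Fintype F] (hcard : Fintype.card F = 2 ^ m)
    (f : F → F) (hf : IsCrooked f) :
    (crookedGraph f).Connected ∧
    (∀ u v : F × ZMod 2 × F, (crookedGraph f).dist u v ≤ 3) ∧
    (∀ u v : F × ZMod 2 × F, (crookedGraph f).dist u v = 0 →
      {w | (crookedGraph f).Adj v w ∧ (crookedGraph f).dist u w = 1}.ncard =
        2 ^ (m + 1) - 1) ∧
    (∀ u v : F × ZMod 2 × F, (crookedGraph f).dist u v = 1 →
      {w | (crookedGraph f).Adj v w ∧ (crookedGraph f).dist u w = 2}.ncard =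
        2 ^ (m + 1) - 2 ∧
      {w | (crookedGraph f).Adj v w ∧ (crookedGraph f).dist u w = 0}.ncard = 1) ∧
    (∀ u v : F × ZMod 2 × F, (crookedGraph f).dist u v = 2 →
      {w | (crookedGraph f).Adj v w ∧ (crookedGraph f).dist u w = 3}.ncard = 1 ∧
      {w | (crookedGraph f).Adj v w ∧ (crookedGraph f).dist u w = 1}.ncard = 2) ∧
    (∀ u v : F × ZMod 2 × F, (crookedGraph f).dist u v = 3 →
      {w | (crookedGraph f).Adj v w ∧ (crookedGraph f).dist u w = 2}.ncard =
        2 ^ (m + 1) - 1) ∧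
    Equivalence (fun u v : F × ZMod 2 × F =>
      u = v ∨ (crookedGraph f).dist u v = 3) :=
  crookedGraph_distance_regular_general hcard f hf
end

section
/- Let m be an odd positive integer, F = 𝔽_{2^m}, and let f : F → F with f(0) = 0. If the crooked graph G_f is distance-regular with intersection array {2^{m+1} − 1, 2^{m+1} − 2, 1; 1, 2, 2^{m+1} − 1} (i.e., for any two vertices u, v at graph distance k, the number of neighbours of v at distance k+1 from u is b_k and at distance k−1 from u is c_k, where (b_0,b_1,b_2) = (2^{m+1}−1, 2^{m+1}−2, 1) and (c_1,c_2,c_3) = (1, 2, 2^{m+1}−1)), then f is crooked. -/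


lemma crooked_adj_iff {F : Type*} [Field F] (f : F → F) (u v : F × ZMod 2 × F) :
    (crookedGraph f).Adj u v ↔ u ≠ v ∧
      u.2.2 + v.2.2 = f (u.1 + v.1) + (u.2.1 + v.2.1 + 1).val • (f u.1 + f v.1) := by
  show (SimpleGraph.fromRel _).Adj u v ↔ _
  rw [SimpleGraph.fromRel_adj]
  constructor
  · rintro ⟨hne, h | h⟩
    · exact ⟨hne, h⟩
    · refine ⟨hne, ?_⟩
      rw [add_comm v.2.2 u.2.2, add_comm v.1 u.1, add_comm v.2.1 u.2.1,
        add_comm (f v.1) (f u.1)] at h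
      exact h
  · rintro ⟨hne, h⟩; exact ⟨hne, Or.inl h⟩

lemma crooked_adj01 {F : Type*} [Field F] (f : F → F) (a α b β : F) :
    (crookedGraph f).Adj (a, 0, α) (b, 1, β) ↔ α + β = f (a + b) := by
  rw [crooked_adj_iff]
  constructor
  · rintro ⟨-, h⟩; simpa [show (1+1 : ZMod 2) = 0 from by decide] using h
  · intro h
    refine ⟨?_, by simpa [show (1+1 : ZMod 2) = 0 from by decide] using h⟩
    simp

lemma crooked_adj00 {F : Type*} [Field F] (f : F → F) (a α b β : F) (hab : a ≠ b) :
    (crookedGraph f).Adj (a, 0, α) (b, 0, β) ↔ α + β = f (a + b) + (f a + f b) := by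
  rw [crooked_adj_iff]
  constructor
  · rintro ⟨-, h⟩; simpa [show ((1:ZMod 2)).val = 1 from rfl] using h
  · intro h
    refine ⟨?_, by simpa [show ((1:ZMod 2)).val = 1 from rfl] using h⟩
    simp [hab]

lemma crooked_adj11 {F : Type*} [Field F] (f : F → F) (a α b β : F) (hab : a ≠ b) :
    (crookedGraph f).Adj (a, 1, α) (b, 1, β) ↔ α + β = f (a + b) + (f a + f b) := by
  rw [crooked_adj_iff]
  constructor
  · rintro ⟨-, h⟩
    simpa [show (1+1 : ZMod 2) = 0 from by decide, show ((1:ZMod 2)).val = 1 from rfl] using h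
  · intro h
    refine ⟨?_, by simpa [show (1+1 : ZMod 2) = 0 from by decide,
      show ((1:ZMod 2)).val = 1 from rfl] using h⟩
    simp [hab]

lemma crooked_no_four {V : Type*} [Finite V] (G : SimpleGraph V)
    (hk2 : ∀ u v : V, G.dist u v = 2 →
      {w | G.Adj v w ∧ G.dist u w = 1}.ncard = 2)
    (u v w1 w2 w3 w4 : V) (huv : u ≠ v) (hnadj : ¬ G.Adj u v)
    (h12 : w1 ≠ w2) (h13 : w1 ≠ w3) (h14 : w1 ≠ w4)
    (h23 : w2 ≠ w3) (h24 : w2 ≠ w4) (h34 : w3 ≠ w4)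
    (hu1 : G.Adj u w1) (hv1 : G.Adj v w1)
    (hu2 : G.Adj u w2) (hv2 : G.Adj v w2)
    (hu3 : G.Adj u w3) (hv3 : G.Adj v w3)
    (hu4 : G.Adj u w4) (hv4 : G.Adj v w4) : False := by
  have hd : G.dist u v = 2 := by
    have hle : G.dist u v ≤ 2 := by
      have := SimpleGraph.dist_le (hu1.toWalk.append hv1.toWalk.reverse)
      simpa [SimpleGraph.Adj.toWalk] using this
    have h0 : G.dist u v ≠ 0 := by
      intro h0
      rcases SimpleGraph.dist_eq_zero_iff_eq_or_not_reachable.mp h0 with h | h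
      · exact huv h
      · exact h ⟨hu1.toWalk.append hv1.toWalk.reverse⟩
    have h1 : G.dist u v ≠ 1 := fun h1 => hnadj (SimpleGraph.dist_eq_one_iff_adj.mp h1)
    omega
  have hS := hk2 u v hd
  have hset : {w | G.Adj v w ∧ G.dist u w = 1} = {w | G.Adj v w ∧ G.Adj u w} := by
    ext x; simp [SimpleGraph.dist_eq_one_iff_adj]
  rw [hset] at hS
  have hsub : ({w1, w2, w3, w4} : Set V) ⊆ {w | G.Adj v w ∧ G.Adj u w} := by
    intro x hx
    simp only [Set.mem_insert_iff, Set.mem_singleton_iff] at hx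
    rcases hx with rfl | rfl | rfl | rfl
    · exact ⟨hv1, hu1⟩
    · exact ⟨hv2, hu2⟩
    · exact ⟨hv3, hu3⟩
    · exact ⟨hv4, hu4⟩
  have h4 : ({w1, w2, w3, w4} : Set V).ncard = 4 := by
    rw [Set.ncard_insert_of_notMem (by simp [h12, h13, h14]),
        Set.ncard_insert_of_notMem (by simp [h23, h24]),
        Set.ncard_pair h34]
  have hle4 := Set.ncard_le_ncard hsub (Set.toFinite _)
  omega

/-- If `G_f` is distance-regular with intersection array
`{2^(m+1) - 1, 2^(m+1) - 2, 1; 1, 2, 2^(m+1) - 1}`, then `f` is crooked. -/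
theorem crooked_of_crookedGraph_distance_regular {m : ℕ} (hm : 0 < m)
    (hmodd : Odd m)
    {F : Type*} [Field F] [Fintype F] (hcard : Fintype.card F = 2 ^ m)
    (f : F → F) (hf0 : f 0 = 0)
    (hconn : (crookedGraph f).Connected)
    (hdiam : ∀ u v : F × ZMod 2 × F, (crookedGraph f).dist u v ≤ 3)
    (hb0 : ∀ u v : F × ZMod 2 × F, (crookedGraph f).dist u v = 0 →
      {w | (crookedGraph f).Adj v w ∧ (crookedGraph f).dist u w = 1}.ncard =
        2 ^ (m + 1) - 1)
    (hk1 : ∀ u v : F × ZMod 2 × F, (crookedGraph f).dist u v = 1 →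
      {w | (crookedGraph f).Adj v w ∧ (crookedGraph f).dist u w = 2}.ncard =
        2 ^ (m + 1) - 2 ∧
      {w | (crookedGraph f).Adj v w ∧ (crookedGraph f).dist u w = 0}.ncard = 1)
    (hk2 : ∀ u v : F × ZMod 2 × F, (crookedGraph f).dist u v = 2 →
      {w | (crookedGraph f).Adj v w ∧ (crookedGraph f).dist u w = 3}.ncard = 1 ∧
      {w | (crookedGraph f).Adj v w ∧ (crookedGraph f).dist u w = 1}.ncard = 2)
    (hk3 : ∀ u v : F × ZMod 2 × F, (crookedGraph f).dist u v = 3 →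
      {w | (crookedGraph f).Adj v w ∧ (crookedGraph f).dist u w = 2}.ncard =
        2 ^ (m + 1) - 1) :
    IsCrooked f := by
  classical
  have htwo : (2 : F) = 0 := by
    have hcz : ((Fintype.card F : ℕ) : F) = 0 := Nat.cast_card_eq_zero F
    rw [hcard] at hcz
    push_cast at hcz
    exact (pow_eq_zero_iff (by omega)).mp hcz
  have h2 : ∀ x : F, x + x = 0 := fun x => by linear_combination x * htwo
  have hcanc : ∀ x y : F, x + y = 0 → x = y := fun x y h => by
    linear_combination h - y * htwo
  have no4 := crooked_no_four (crookedGraph f) (fun u v h => (hk2 u v h).2)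
  have midne : ∀ (a α b β : F), ((a,(0:ZMod 2),α) : F × ZMod 2 × F) ≠ (b,1,β) := by
    intro a α b β h
    simpa using congrArg (fun p => p.2.1) h
  have midne' : ∀ (a α b β : F), ((a,(1:ZMod 2),α) : F × ZMod 2 × F) ≠ (b,0,β) := by
    intro a α b β h
    simpa using congrArg (fun p => p.2.1) h
  have adjA : ∀ A d : F, (crookedGraph f).Adj (A,0,0) (d,1,f (A+d)) := by
    intro A d
    rw [crooked_adj01]
    rw [zero_add]
  have adj_u0_d0 : ∀ d : F, d ≠ 0 → (crookedGraph f).Adj (0,0,0) (d,0,0) := by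
    intro d hd
    rw [crooked_adj00 f 0 0 d 0 (Ne.symm hd)]
    rw [zero_add, zero_add, hf0, zero_add]
    exact (h2 (f d)).symm
  have adj_u0_d1 : ∀ d : F, (crookedGraph f).Adj (0,0,0) (d,1,f d) := by
    intro d
    have := adjA 0 d
    rwa [zero_add] at this
  -- key2 : two distinct nonzero points cannot share a nonzero value
  have key2 : ∀ p q : F, p ≠ q → p ≠ 0 → q ≠ 0 → f p ≠ 0 → f p = f q → False := by
    intro p q hne hpz hqz hp0 hpq
    refine no4 ((0:F),(0:ZMod 2),(0:F)) ((0:F),(1:ZMod 2),f p)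
      (p,0,0) (q,0,0) (p,1,f p) (q,1,f q)
      (midne 0 0 0 (f p)) ?_ ?_ (midne p 0 p (f p)) (midne p 0 q (f q))
      (midne q 0 p (f p)) (midne q 0 q (f q)) ?_
      (adj_u0_d0 p hpz) ?_ (adj_u0_d0 q hqz) ?_ (adj_u0_d1 p) ?_ (adj_u0_d1 q) ?_
    · rw [crooked_adj01]
      simp [hf0, hp0]
    · exact fun h => hne (congrArg Prod.fst h)
    · exact fun h => hne (congrArg Prod.fst h)
    · exact ((crooked_adj01 f p 0 0 (f p)).mpr (by rw [zero_add, add_zero])).symm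
    · exact ((crooked_adj01 f q 0 0 (f p)).mpr (by rw [zero_add, add_zero, hpq])).symm
    · rw [crooked_adj11 f 0 (f p) p (f p) (Ne.symm hpz)]
      rw [zero_add, hf0, zero_add]
    · rw [crooked_adj11 f 0 (f p) q (f q) (Ne.symm hqz)]
      rw [zero_add, hf0, zero_add, hpq]
  -- injectivity
  have hinj : ∀ p q : F, f p = f q → p = q := by
    intro p q hpq
    by_contra hne
    by_cases hp0 : f p = 0
    · obtain ⟨r, hr0, hfr⟩ : ∃ r, r ≠ 0 ∧ f r = 0 := by
        rcases eq_or_ne p 0 with h | h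
        · exact ⟨q, fun hq => hne (h.trans hq.symm), by rw [← hpq, hp0]⟩
        · exact ⟨p, h, hp0⟩
      have hper : ∀ e, f (e + r) = f e := by
        intro e
        by_contra hne2
        have hT : f e + f (e + r) ≠ 0 := fun h => hne2 ((hcanc _ _ h).symm)
        have he0 : e ≠ 0 := by
          intro h; apply hT
          rw [h, hf0, zero_add, zero_add]
          exact hfr
        have her : e ≠ r := by
          intro h; apply hT
          rw [h, hfr, zero_add, h2 r, hf0]
        have her' : e + r ≠ 0 := fun h => her (hcanc _ _ h)
        refine no4 ((0:F),(0:ZMod 2),(0:F)) (r, 0, f e + f (e+r))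
          (e,1,f e) (e+r,1,f (e+r)) (e,0,0) (e+r,0,0)
          ?_ ?_ ?_ (midne' e (f e) e 0) (midne' e (f e) (e+r) 0)
          (midne' (e+r) (f (e+r)) e 0) (midne' (e+r) (f (e+r)) (e+r) 0) ?_
          (adj_u0_d1 e) ?_ (adj_u0_d1 (e+r)) ?_ (adj_u0_d0 e he0) ?_
          (adj_u0_d0 (e+r) her') ?_
        · exact fun h => hr0 (congrArg Prod.fst h).symm
        · intro hadj
          rw [crooked_adj00 f 0 0 r (f e + f (e+r)) (Ne.symm hr0)] at hadj
          simp [hf0, hfr] at hadj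
          exact hT hadj
        · intro h
          have h' := congrArg Prod.fst h
          exact hr0 (by linear_combination -h')
        · intro h
          have h' := congrArg Prod.fst h
          exact hr0 (by linear_combination -h')
        · rw [crooked_adj01]
          rw [add_comm r e]
          linear_combination (f e) * htwo
        · rw [crooked_adj01]
          rw [show r + (e+r) = e from by linear_combination r * htwo]
          linear_combination (f (e+r)) * htwo
        · rw [crooked_adj00 f r (f e + f (e+r)) e 0 (Ne.symm her)]
          rw [add_comm r e, hfr]
          linear_combination
        · rw [crooked_adj00 f r (f e + f (e+r)) (e+r) 0
            (fun h => he0 (by linear_combination -h))]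
          rw [show r + (e+r) = e from by linear_combination r * htwo, hfr]
          linear_combination
      by_cases hex : ∃ e, f e ≠ 0
      · obtain ⟨e0, he0⟩ := hex
        have hd1 : e0 ≠ e0 + r := fun h => hr0 (by linear_combination -h)
        have hd2 : e0 ≠ 0 := fun h => he0 (by rw [h, hf0])
        have hd3 : e0 + r ≠ 0 := fun h => he0 (by rw [← hper e0, h, hf0])
        exact key2 e0 (e0+r) hd1 hd2 hd3 he0 (hper e0).symm
      · push_neg at hex
        have hthird : ∀ x y : F × ZMod 2 × F, (crookedGraph f).Adj x y →
            x.2.2 = y.2.2 := by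
          intro x y hxy
          rw [crooked_adj_iff] at hxy
          obtain ⟨-, h⟩ := hxy
          simp only [hex] at h
          apply hcanc
          simpa using h
        have hwalk : ∀ (x y : F × ZMod 2 × F) (w : (crookedGraph f).Walk x y),
            x.2.2 = y.2.2 := by
          intro x y w
          induction w with
          | nil => rfl
          | cons h p ih => exact (hthird _ _ h).trans ih
        obtain ⟨w⟩ := hconn.preconnected ((0:F),(0:ZMod 2),(0:F)) (0,0,1)
        exact one_ne_zero (hwalk _ _ w).symm
    · have hpz : p ≠ 0 := fun h => hp0 (by rw [h, hf0])
      have hqz : q ≠ 0 := fun h => hp0 (by rw [hpq, h, hf0])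
      exact key2 p q hne hpz hqz hp0 hpq
  -- APN property
  have hAPN : ∀ x y z : F, x ≠ y → x ≠ z → y ≠ z →
      f x + f y + f z ≠ f (x + y + z) := by
    intro x y z hxy hxz hyz hcon
    have d1 : (0:F) ≠ x + y := fun h => hxy (hcanc x y h.symm)
    have d2 : (0:F) ≠ x + z := fun h => hxz (hcanc x z h.symm)
    have d3 : (0:F) ≠ y + z := fun h => hyz (hcanc y z h.symm)
    have d4 : x + y ≠ x + z := fun h => hyz (by linear_combination h)
    have d5 : x + y ≠ y + z := fun h => hxz (by linear_combination h)
    have d6 : x + z ≠ y + z := fun h => hxy (by linear_combination h)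
    refine no4 (x,(0:ZMod 2),(0:F)) (y, 0, f x + f y)
      ((0:F),(1:ZMod 2),f (x+0)) (x+y,1,f (x+(x+y)))
      (x+z,1,f (x+(x+z))) (y+z,1,f (x+(y+z)))
      ?_ ?_ ?_ ?_ ?_ ?_ ?_ ?_
      (adjA x 0) ?_ (adjA x (x+y)) ?_ (adjA x (x+z)) ?_ (adjA x (y+z)) ?_
    · exact fun h => hxy (congrArg Prod.fst h)
    · intro hadj
      rw [crooked_adj00 f x 0 y (f x + f y) hxy] at hadj
      have hz' : f (x+y) = f 0 := by rw [hf0]; linear_combination -hadj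
      exact hxy (hcanc x y (hinj _ _ hz'))
    · exact fun h => d1 (congrArg Prod.fst h)
    · exact fun h => d2 (congrArg Prod.fst h)
    · exact fun h => d3 (congrArg Prod.fst h)
    · exact fun h => d4 (congrArg Prod.fst h)
    · exact fun h => d5 (congrArg Prod.fst h)
    · exact fun h => d6 (congrArg Prod.fst h)
    · rw [crooked_adj01]
      rw [add_zero, add_zero]
      linear_combination (f x) * htwo
    · rw [crooked_adj01]
      rw [show x + (x+y) = y from by linear_combination x * htwo,
          show y + (x+y) = x from by linear_combination y * htwo]
      linear_combination (f y) * htwo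
    · rw [crooked_adj01]
      rw [show x + (x+z) = z from by linear_combination x * htwo,
          show y + (x+z) = x + y + z from by ring]
      linear_combination hcon
    · rw [crooked_adj01]
      rw [show x + (y+z) = x + y + z from by ring,
          show y + (y+z) = z from by linear_combination y * htwo]
      linear_combination hcon + (f (x+y+z) - f z) * htwo
  -- bentness property
  have part3 : ∀ x y z a : F, a ≠ 0 →
      f x + f y + f z ≠ f (x+a) + f (y+a) + f (z+a) := by
    intro x y z a ha hcon
    have hσ : f x + f (x+a) ≠ 0 := by
      intro h
      have h' := hinj _ _ (hcanc _ _ h)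
      exact ha (by linear_combination -h')
    have hsum : f z + f (z+a) = (f x + f (x+a)) + (f y + f (y+a)) := by
      linear_combination -hcon + (f z - f (x+a) - f (y+a)) * htwo
    have haa : x + a ≠ x := fun h => ha (by linear_combination h)
    by_cases hcase : f z + f (z+a) = f a
    · -- use u = (z,0,0), v = (z+a,0,σ)
      have hy0 : y ≠ 0 := by
        intro h
        apply hσ
        rw [h, hf0, zero_add, zero_add] at hsum
        linear_combination hcase - hsum
      have hya : y ≠ a := by
        intro h
        apply hσ
        rw [h, h2 a, hf0, add_zero] at hsum
        linear_combination hcase - hsum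
      refine no4 (z,(0:ZMod 2),(0:F)) (z+a, 0, f x + f (x+a))
        (z+x,1,f (z+(z+x))) (z+x+a,1,f (z+(z+x+a)))
        (z+y, 0, f y + (f z + f (z+y)))
        (z+y+a, 0, f (y+a) + (f z + f (z+y+a)))
        ?_ ?_ ?_ (midne' (z+x) _ (z+y) _) (midne' (z+x) _ (z+y+a) _)
        (midne' (z+x+a) _ (z+y) _) (midne' (z+x+a) _ (z+y+a) _) ?_
        (adjA z (z+x)) ?_ (adjA z (z+x+a)) ?_ ?_ ?_ ?_ ?_
      · exact fun h => ha (by linear_combination -(congrArg Prod.fst h))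
      · intro hadj
        rw [crooked_adj00 f z 0 (z+a) (f x + f (x+a))
          (fun h => ha (by linear_combination -h))] at hadj
        rw [show z + (z+a) = a from by linear_combination z * htwo] at hadj
        apply hσ
        linear_combination hadj + hcase + (f a) * htwo
      · intro h
        exact ha (by linear_combination -(congrArg Prod.fst h))
      · intro h
        exact ha (by linear_combination -(congrArg Prod.fst h))
      · rw [crooked_adj01]
        rw [show z + (z+x) = x from by linear_combination z * htwo,
            show (z+a) + (z+x) = x+a from by linear_combination z * htwo]
        linear_combination (f x) * htwo
      · rw [crooked_adj01]
        rw [show z + (z+x+a) = x+a from by linear_combination z * htwo,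
            show (z+a) + (z+x+a) = x from by linear_combination (z+a) * htwo]
        linear_combination (f (x+a)) * htwo
      · rw [crooked_adj00 f z 0 (z+y) (f y + (f z + f (z+y)))
          (fun h => hy0 (by linear_combination -h))]
        rw [show z + (z+y) = y from by linear_combination z * htwo]
        linear_combination
      · rw [crooked_adj00 f (z+a) (f x + f (x+a)) (z+y) (f y + (f z + f (z+y)))
          (fun h => hya (by linear_combination -h))]
        rw [show (z+a) + (z+y) = y+a from by linear_combination z * htwo]
        linear_combination hsum + (f x + f (x+a) + f y - f (z+a)) * htwo
      · rw [crooked_adj00 f z 0 (z+y+a) (f (y+a) + (f z + f (z+y+a)))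
          (fun h => hya (hcanc y a (by linear_combination -h)))]
        rw [show z + (z+y+a) = y+a from by linear_combination z * htwo]
        linear_combination
      · rw [crooked_adj00 f (z+a) (f x + f (x+a)) (z+y+a)
          (f (y+a) + (f z + f (z+y+a))) (fun h => hy0 (by linear_combination -h))]
        rw [show (z+a) + (z+y+a) = y from by linear_combination (z+a) * htwo]
        linear_combination hsum + (f x + f (x+a) + f (y+a) - f (z+a)) * htwo
    · -- use u = (x,0,0), v = (x+a,0,τ)
      have hz0 : z ≠ 0 := by
        intro h; apply hcase
        rw [h, hf0, zero_add, zero_add]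
      have hza : z ≠ a := by
        intro h; apply hcase
        rw [h, h2 a, hf0, add_zero]
      refine no4 (x,(0:ZMod 2),(0:F)) (x+a, 0, f y + f (y+a))
        (x+y,1,f (x+(x+y))) (x+y+a,1,f (x+(x+y+a)))
        (x+z, 0, f z + (f x + f (x+z)))
        (x+z+a, 0, f (z+a) + (f x + f (x+z+a)))
        ?_ ?_ ?_ (midne' (x+y) _ (x+z) _) (midne' (x+y) _ (x+z+a) _)
        (midne' (x+y+a) _ (x+z) _) (midne' (x+y+a) _ (x+z+a) _) ?_
        (adjA x (x+y)) ?_ (adjA x (x+y+a)) ?_ ?_ ?_ ?_ ?_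
      · exact fun h => ha (by linear_combination -(congrArg Prod.fst h))
      · intro hadj
        rw [crooked_adj00 f x 0 (x+a) (f y + f (y+a))
          (fun h => ha (by linear_combination -h))] at hadj
        rw [show x + (x+a) = a from by linear_combination x * htwo] at hadj
        apply hcase
        linear_combination hsum + hadj + (f x + f (x+a)) * htwo
      · intro h
        exact ha (by linear_combination -(congrArg Prod.fst h))
      · intro h
        exact ha (by linear_combination -(congrArg Prod.fst h))
      · rw [crooked_adj01]
        rw [show x + (x+y) = y from by linear_combination x * htwo,
            show (x+a) + (x+y) = y+a from by linear_combination x * htwo]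
        linear_combination (f y) * htwo
      · rw [crooked_adj01]
        rw [show x + (x+y+a) = y+a from by linear_combination x * htwo,
            show (x+a) + (x+y+a) = y from by linear_combination (x+a) * htwo]
        linear_combination (f (y+a)) * htwo
      · rw [crooked_adj00 f x 0 (x+z) (f z + (f x + f (x+z)))
          (fun h => hz0 (by linear_combination -h))]
        rw [show x + (x+z) = z from by linear_combination x * htwo]
        linear_combination
      · rw [crooked_adj00 f (x+a) (f y + f (y+a)) (x+z) (f z + (f x + f (x+z)))
          (fun h => hza (by linear_combination -h))]
        rw [show (x+a) + (x+z) = z+a from by linear_combination x * htwo]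
        linear_combination -hsum + (f z - f (x+a)) * htwo
      · rw [crooked_adj00 f x 0 (x+z+a) (f (z+a) + (f x + f (x+z+a)))
          (fun h => hza (hcanc z a (by linear_combination -h)))]
        rw [show x + (x+z+a) = z+a from by linear_combination x * htwo]
        linear_combination
      · rw [crooked_adj00 f (x+a) (f y + f (y+a)) (x+z+a)
          (f (z+a) + (f x + f (x+z+a))) (fun h => hz0 (by linear_combination -h))]
        rw [show (x+a) + (x+z+a) = z from by linear_combination (x+a) * htwo]
        linear_combination -hsum + (f (z+a) - f (x+a)) * htwo
  exact ⟨hf0, hAPN, part3⟩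
end

section
/- Let m be an odd positive integer, F = 𝔽_{2^m}, and let f : F → F with f(0) = 0. Suppose that in the crooked graph G_f, any two vertices at graph distance 1 have exactly 0 common neighbours (a_1 = 0) and any two vertices at graph distance 2 have exactly 2 common neighbours (c_2 = 2). Then for all a ≠ b in F, every element t ∈ F satisfies exactly one of the following: either t = f(a+c) + f(b+c) for exactly two values c ∈ F and t ≠ f(a+c) + f(b+c) + f(a) + f(b) for all c ∈ F, or t = f(a+c) + f(b+c) + f(a) + f(b) for exactly two values c ∈ F and t ≠ f(a+c) + f(b+c) for all c ∈ F; equivalently, the multiset {f(a+c) + f(b+c) : c ∈ F} ⊎ {f(a+c) + f(b+c) + f(a) + f(b) : c ∈ F} contains each element of F exactly twice. -/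
/-- If in `G_f` any two vertices at distance 1 have no common neighbour
(`a₁ = 0`) and any two vertices at distance 2 have exactly two common
neighbours (`c₂ = 2`), then for all `a ≠ b` the multiset
`{f(a+c) + f(b+c) : c} ⊎ {f(a+c) + f(b+c) + f(a) + f(b) : c}` contains each
element of `F` exactly twice. -/
theorem crookedGraph_double_cover_count {m : ℕ} (hm : 0 < m) (hmodd : Odd m)
    {F : Type*} [Field F] [Fintype F] (hcard : Fintype.card F = 2 ^ m)
    (f : F → F) (hf0 : f 0 = 0)
    (ha1 : ∀ u v : F × ZMod 2 × F, (crookedGraph f).dist u v = 1 →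
      {w | (crookedGraph f).Adj u w ∧ (crookedGraph f).Adj v w}.ncard = 0)
    (hc2 : ∀ u v : F × ZMod 2 × F, (crookedGraph f).dist u v = 2 →
      {w | (crookedGraph f).Adj u w ∧ (crookedGraph f).Adj v w}.ncard = 2) :
    ∀ a b : F, a ≠ b → ∀ t : F,
      {c : F | f (a + c) + f (b + c) = t}.ncard +
        {c : F | f (a + c) + f (b + c) + (f a + f b) = t}.ncard = 2 := by
  classical
  -- characteristic 2
  haveI : CharP F (ringChar F) := ringChar.charP F
  have hpchar : ringChar F = 2 := by
    obtain ⟨n, hp, hc⟩ := FiniteField.card F (ringChar F)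
    rw [hcard] at hc
    have hdvd : ringChar F ∣ 2 ^ m := by
      rw [hc]; exact dvd_pow_self _ n.pos.ne'
    exact (Nat.prime_dvd_prime_iff_eq hp Nat.prime_two).mp
      (Nat.Prime.dvd_of_dvd_pow hp hdvd)
  haveI hchar : CharP F 2 := hpchar ▸ ringChar.charP F
  have h2f : (2 : F) = 0 := CharTwo.two_eq_zero
  have hxx : ∀ x : F, x + x = 0 := CharTwo.add_self_eq_zero
  -- adjacency characterization
  have adj_iff : ∀ u w : F × ZMod 2 × F, (crookedGraph f).Adj u w ↔
      u ≠ w ∧ u.2.2 + w.2.2 = f (u.1 + w.1) + (u.2.1 + w.2.1 + 1).val • (f u.1 + f w.1) := by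
    intro u w
    show (SimpleGraph.fromRel _).Adj u w ↔ _
    rw [SimpleGraph.fromRel_adj]
    constructor
    · rintro ⟨hne, h | h⟩
      · exact ⟨hne, h⟩
      · refine ⟨hne, ?_⟩
        rw [add_comm w.2.2, add_comm w.1 u.1, add_comm w.2.1, add_comm (f w.1)] at h
        exact h
    · rintro ⟨hne, h⟩; exact ⟨hne, Or.inl h⟩
  have hk01 : ∀ k : ZMod 2, k = 0 ∨ k = 1 := by decide
  have hval1 : ((0 : ZMod 2) + 0 + 1).val = 1 := by decide
  have hval1' : ((0 : ZMod 2) + 1).val = 1 := by decide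
  have hval0 : ((0 : ZMod 2) + 1 + 1).val = 0 := by decide
  intro a b hab
  have huv : ∀ t : F, ((a, 0, 0) : F × ZMod 2 × F) ≠ (b, 0, t) := by
    intro t h
    exact hab (congrArg Prod.fst h)
  -- the common-neighbour set
  have hN : ∀ t : F,
      {w | (crookedGraph f).Adj (a, 0, 0) w ∧ (crookedGraph f).Adj (b, 0, t) w} =
      (fun c => (c, (1 : ZMod 2), f (a + c))) '' {c : F | f (a + c) + f (b + c) = t} ∪
      (fun c => (c, (0 : ZMod 2), f (a + c) + (f a + f c))) ''
        ({c : F | f (a + c) + f (b + c) + (f a + f b) = t} \ {a, b}) := by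
    intro t
    ext ⟨c, k, γ⟩
    rcases hk01 k with rfl | rfl
    · simp only [Set.mem_setOf_eq, adj_iff, Set.mem_union, Set.mem_image, Set.mem_diff,
        Set.mem_insert_iff, Set.mem_singleton_iff, Prod.mk.injEq, ne_eq, hval1, hval1',
        one_smul, hval0, zero_smul, add_zero]
      constructor
      · rintro ⟨⟨hne1, h1⟩, hne2, h2⟩
        have hca : a ≠ c := by
          rintro rfl
          apply hne1
          refine ⟨rfl, trivial, ?_⟩
          rw [hxx a, hf0, hxx (f a)] at h1
          linear_combination -h1
        have hcb : b ≠ c := by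
          rintro rfl
          apply hne2
          refine ⟨rfl, trivial, ?_⟩
          rw [hxx b, hf0, hxx (f b)] at h2
          linear_combination h2 - hxx γ
        right
        refine ⟨c, ⟨?_, ?_⟩, rfl, trivial, ?_⟩
        · linear_combination -h1 - h2 + (γ - f c) * h2f
        · rintro (rfl | rfl)
          · exact hca rfl
          · exact hcb rfl
        · linear_combination -h1
      · rintro (⟨x, -, -, h10, -⟩ | ⟨x, ⟨hx, hxor⟩, rfl, -, rfl⟩)
        · exact absurd h10 (by decide)
        · refine ⟨⟨?_, by ring⟩, ?_, ?_⟩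
          · rintro ⟨rfl, -, -⟩
            exact hxor (Or.inl rfl)
          · rintro ⟨rfl, -, -⟩
            exact hxor (Or.inr rfl)
          · linear_combination -hx + (f (a + x) + f a) * h2f
    · simp only [Set.mem_setOf_eq, adj_iff, Set.mem_union, Set.mem_image, Set.mem_diff,
        Set.mem_insert_iff, Set.mem_singleton_iff, Prod.mk.injEq, ne_eq, hval1, hval1',
        one_smul, hval0, zero_smul, add_zero]
      constructor
      · rintro ⟨⟨-, h1⟩, -, h2⟩
        left
        refine ⟨c, ?_, rfl, trivial, ?_⟩
        · linear_combination -h1 - h2 + γ * h2f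
        · linear_combination -h1
      · rintro (⟨x, hx, rfl, -, rfl⟩ | ⟨x, -, -, h01, -⟩)
        · refine ⟨⟨?_, by ring⟩, ?_, ?_⟩
          · rintro ⟨-, h, -⟩
            exact absurd h (by decide)
          · rintro ⟨-, h, -⟩
            exact absurd h (by decide)
          · linear_combination -hx + f (a + x) * h2f
        · exact absurd h01 (by decide)
  -- cardinality of the common-neighbour set
  have hinj1 : Function.Injective (fun c : F => ((c, (1 : ZMod 2), f (a + c)) : F × ZMod 2 × F)) :=
    fun x y h => congrArg Prod.fst h
  have hinj2 : Function.Injective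
      (fun c : F => ((c, (0 : ZMod 2), f (a + c) + (f a + f c)) : F × ZMod 2 × F)) :=
    fun x y h => congrArg Prod.fst h
  have hNcard : ∀ t : F,
      {w | (crookedGraph f).Adj (a, 0, 0) w ∧ (crookedGraph f).Adj (b, 0, t) w}.ncard =
      {c : F | f (a + c) + f (b + c) = t}.ncard +
      ({c : F | f (a + c) + f (b + c) + (f a + f b) = t} \ {a, b}).ncard := by
    intro t
    rw [hN t, Set.ncard_union_eq ?_ (Set.toFinite _) (Set.toFinite _),
      Set.ncard_image_of_injective _ hinj1, Set.ncard_image_of_injective _ hinj2]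
    rw [Set.disjoint_left]
    rintro w ⟨x, -, rfl⟩ ⟨y, -, hy⟩
    simp only [Prod.mk.injEq] at hy
    exact absurd hy.2.1 (by decide)
  -- the bound : each pair of counts is at most 2, and equals 2 in the adjacent case
  have hg2 : ∀ t : F,
      {c : F | f (a + c) + f (b + c) = t}.ncard +
        {c : F | f (a + c) + f (b + c) + (f a + f b) = t}.ncard = 2 ∨
      {c : F | f (a + c) + f (b + c) = t}.ncard +
        {c : F | f (a + c) + f (b + c) + (f a + f b) = t}.ncard = 0 := by
    intro t
    by_cases hT : t = f (a + b) + (f a + f b)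
    · -- adjacent case
      left
      have hadj : (crookedGraph f).Adj (a, 0, 0) (b, 0, t) := by
        rw [adj_iff]
        refine ⟨huv t, ?_⟩
        simp only [hval1, one_smul]
        rw [zero_add, hT]
      have hdist : (crookedGraph f).dist (a, 0, 0) (b, 0, t) = 1 :=
        SimpleGraph.dist_eq_one_iff_adj.mpr hadj
      have h0 := ha1 _ _ hdist
      rw [hNcard t] at h0
      obtain ⟨h01, h02⟩ := Nat.add_eq_zero.mp h0
      have hsub : ({a, b} : Set F) ⊆ {c : F | f (a + c) + f (b + c) + (f a + f b) = t} := by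
        rintro c (rfl | rfl)
        · show f (c + c) + f (b + c) + (f c + f b) = t
          rw [hxx c, hf0, zero_add, add_comm b c, hT]
        · show f (a + c) + f (c + c) + (f a + f c) = t
          rw [hxx c, hf0, add_zero, hT]
      have := Set.ncard_diff_add_ncard_of_subset hsub (Set.toFinite _)
      rw [h02, Set.ncard_pair hab, zero_add] at this
      rw [h01, ← this, zero_add]
    · -- non-adjacent case
      have hdiffeq : {c : F | f (a + c) + f (b + c) + (f a + f b) = t} \ {a, b} =
          {c : F | f (a + c) + f (b + c) + (f a + f b) = t} := by
        ext c
        simp only [Set.mem_diff, Set.mem_setOf_eq, Set.mem_insert_iff, Set.mem_singleton_iff]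
        constructor
        · exact fun h => h.1
        · intro h
          refine ⟨h, ?_⟩
          rintro (rfl | rfl)
          · apply hT
            rw [hxx c, hf0, zero_add, add_comm b c] at h
            exact h.symm
          · apply hT
            rw [hxx c, hf0, add_zero] at h
            exact h.symm
      have hNcard' : {w | (crookedGraph f).Adj (a, 0, 0) w ∧
          (crookedGraph f).Adj (b, 0, t) w}.ncard =
          {c : F | f (a + c) + f (b + c) = t}.ncard +
          {c : F | f (a + c) + f (b + c) + (f a + f b) = t}.ncard := by
        rw [hNcard t, hdiffeq]
      by_cases hNe : {w | (crookedGraph f).Adj (a, 0, 0) w ∧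
          (crookedGraph f).Adj (b, 0, t) w} = ∅
      · right
        rw [← hNcard', hNe, Set.ncard_empty]
      · left
        obtain ⟨w, hw1, hw2⟩ := Set.nonempty_iff_ne_empty.mpr hNe
        have hnadj : ¬ (crookedGraph f).Adj (a, 0, 0) (b, 0, t) := by
          intro h
          obtain ⟨-, heq⟩ := (adj_iff _ _).mp h
          simp only [hval1, one_smul] at heq
          rw [zero_add] at heq
          exact hT heq
        have hdist2 : (crookedGraph f).dist (a, 0, 0) (b, 0, t) = 2 := by
          have hle : (crookedGraph f).dist (a, 0, 0) (b, 0, t) ≤ 2 := by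
            have := SimpleGraph.dist_le
              (SimpleGraph.Walk.cons hw1 (SimpleGraph.Walk.cons hw2.symm SimpleGraph.Walk.nil))
            simpa [SimpleGraph.Walk.length_cons] using this
          have hpos : 0 < (crookedGraph f).dist (a, 0, 0) (b, 0, t) :=
            SimpleGraph.Reachable.pos_dist_of_ne ⟨SimpleGraph.Walk.cons hw1
              (SimpleGraph.Walk.cons hw2.symm SimpleGraph.Walk.nil)⟩ (huv t)
          have hne1 : (crookedGraph f).dist (a, 0, 0) (b, 0, t) ≠ 1 := by
            intro h
            exact hnadj (SimpleGraph.dist_eq_one_iff_adj.mp h)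
          omega
        have := hc2 _ _ hdist2
        rw [hNcard'] at this
        exact this
  -- summing over all t
  have hfib : ∀ (φ : F → F), ∑ t : F, {c : F | φ c = t}.ncard = Fintype.card F := by
    intro φ
    have hcf : ∀ t : F, {c : F | φ c = t}.ncard =
        (Finset.univ.filter fun c => φ c = t).card := by
      intro t
      rw [← Set.ncard_coe_finset]
      congr 1
      ext c
      simp
    calc ∑ t : F, {c : F | φ c = t}.ncard
        = ∑ t : F, (Finset.univ.filter fun c => φ c = t).card := by
          exact Finset.sum_congr rfl fun t _ => hcf t
      _ = (Finset.univ : Finset F).card :=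
          (Finset.card_eq_sum_card_fiberwise (fun x _ => Finset.mem_univ (φ x))).symm
      _ = Fintype.card F := Finset.card_univ
  have hsumtot : ∑ t : F, ({c : F | f (a + c) + f (b + c) = t}.ncard +
      {c : F | f (a + c) + f (b + c) + (f a + f b) = t}.ncard) = 2 * Fintype.card F := by
    rw [Finset.sum_add_distrib, hfib (fun c => f (a + c) + f (b + c)),
      hfib (fun c => f (a + c) + f (b + c) + (f a + f b))]
    ring
  intro t
  by_contra hne
  have hlt : {c : F | f (a + c) + f (b + c) = t}.ncard +
      {c : F | f (a + c) + f (b + c) + (f a + f b) = t}.ncard < 2 := by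
    rcases hg2 t with h | h
    · exact absurd h hne
    · omega
  have hsumlt : ∑ s : F, ({c : F | f (a + c) + f (b + c) = s}.ncard +
      {c : F | f (a + c) + f (b + c) + (f a + f b) = s}.ncard) < ∑ _s : F, 2 := by
    refine Finset.sum_lt_sum (fun i _ => ?_) ⟨t, Finset.mem_univ t, hlt⟩
    rcases hg2 i with h | h <;> omega
  rw [hsumtot, Finset.sum_const, Finset.card_univ, smul_eq_mul, mul_comm] at hsumlt
  exact lt_irrefl _ hsumlt
end
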